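/- arXiv:1411.5707 — 2 statements merged into one kernel-verified Lean document; each statement's English description precedes it below -/
import Mathlib

section
/- Let f1,...,f8 ∈ L²(ℝ), and let M1, M4, M7 > 0 with adapted bump functions φ_{M1}, φ_{M4}, φ_{M7} supported in the corresponding annuli and valued in [0,1]. Then ∫_{ξ1+⋯+ξ8=0} φ_{M1}(ξ2+ξ3) φ_{M4}(ξ5+ξ6) φ_{M7}(ξ7+ξ8) ∏_{j=1}^{8} |f_j(ξ_j)| ≤ C · M1 M4 M7 ∏_{j=1}^{8} ‖f_j‖_{L²}. -/
open MeasureTheory Set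
open scoped ENNReal

noncomputable section

namespace EightLin

/-! ### Generic reduction from Bochner integrals to lintegrals -/

lemma int_le_lint (g : ℝ → ℝ) :
    ∫ x, g x ≤ (∫⁻ x, ENNReal.ofReal ‖g x‖).toReal := by
  calc ∫ x, g x ≤ ‖∫ x, g x‖ := le_abs_self _
    _ ≤ (∫⁻ x, ENNReal.ofReal ‖g x‖).toReal := norm_integral_le_lintegral_norm (μ := volume) g

lemma ofReal_int_le (g : ℝ → ℝ) :
    ENNReal.ofReal ‖∫ x, g x‖ ≤ ∫⁻ x, ENNReal.ofReal ‖g x‖ :=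
  le_trans (ENNReal.ofReal_le_ofReal (norm_integral_le_lintegral_norm (μ := volume) g))
    ENNReal.ofReal_toReal_le

/-! ### Invariance of the Lebesgue integral -/

lemma lint_shift (f : ℝ → ℝ≥0∞) (c : ℝ) : ∫⁻ x, f (c + x) = ∫⁻ x, f x :=
  lintegral_add_left_eq_self f c

lemma lint_neg (f : ℝ → ℝ≥0∞) : ∫⁻ x, f (-x) = ∫⁻ x, f x := by
  have h := lintegral_map_equiv (μ := (volume : Measure ℝ)) f (MeasurableEquiv.neg ℝ)
  have h2 : Measure.map (⇑(MeasurableEquiv.neg ℝ)) (volume : Measure ℝ) = volume := by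
    have : ⇑(MeasurableEquiv.neg ℝ) = (Neg.neg : ℝ → ℝ) := rfl
    rw [this, Measure.map_neg_eq_self]
  rw [h2] at h
  have h3 : ∀ x : ℝ, f ((MeasurableEquiv.neg ℝ) x) = f (-x) := fun x => rfl
  simp only [h3] at h
  exact h.symm

lemma lint_reflect (f : ℝ → ℝ≥0∞) (c : ℝ) : ∫⁻ x, f (c - x) = ∫⁻ x, f x := by
  have h1 : ∫⁻ x, f (c - x) = ∫⁻ x, (fun y => f (c + y)) (-x) := by
    refine lintegral_congr fun x => ?_
    simp [sub_eq_add_neg]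
  rw [h1, lint_neg (fun y => f (c + y)), lint_shift]

/-! ### Cauchy-Schwarz for lintegrals -/

lemma sq_sqrt (a : ℝ≥0∞) : (a ^ (1/2 : ℝ)) ^ (2 : ℝ) = a := by
  rw [← ENNReal.rpow_mul]
  norm_num

lemma sqrt_mul (a b : ℝ≥0∞) : (a * b) ^ (1/2 : ℝ) = a ^ (1/2 : ℝ) * b ^ (1/2 : ℝ) :=
  ENNReal.mul_rpow_of_nonneg a b (by norm_num)

lemma rpow_two' (x : ℝ≥0∞) : x ^ (2:ℝ) = x * x := by
  rw [show (2:ℝ) = ((2:ℕ):ℝ) by norm_num, ENNReal.rpow_natCast]; ring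

lemma sqrt_mul_self (a : ℝ≥0∞) : a ^ (1/2 : ℝ) * a ^ (1/2 : ℝ) = a := by
  rw [← rpow_two', sq_sqrt]

lemma lint_CS (u v : ℝ → ℝ≥0∞) (hu : AEMeasurable u volume) (hv : AEMeasurable v volume) :
    ∫⁻ x, u x * v x ≤
      (∫⁻ x, u x ^ (2:ℝ)) ^ (1/2 : ℝ) * (∫⁻ x, v x ^ (2:ℝ)) ^ (1/2 : ℝ) := by
  have hpq : Real.HolderConjugate 2 2 := Real.HolderConjugate.two_two
  simpa using ENNReal.lintegral_mul_le_Lp_mul_Lq volume hpq hu hv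

lemma lint_CS_sqrt (u F : ℝ → ℝ≥0∞) (hu : AEMeasurable u volume) (hF : AEMeasurable F volume) :
    ∫⁻ x, u x * (F x) ^ (1/2 : ℝ) ≤
      (∫⁻ x, u x ^ (2:ℝ)) ^ (1/2 : ℝ) * (∫⁻ x, F x) ^ (1/2 : ℝ) := by
  have h := lint_CS u (fun x => F x ^ (1/2:ℝ)) hu (hF.pow_const _)
  have h2 : ∫⁻ x, (F x ^ (1/2:ℝ)) ^ (2:ℝ) = ∫⁻ x, F x :=
    lintegral_congr fun x => sq_sqrt _
  rwa [h2] at h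

lemma lint_CS_weight (u w : ℝ → ℝ≥0∞) (hu : AEMeasurable u volume) (hw : AEMeasurable w volume) :
    ∫⁻ x, u x * w x ≤
      (∫⁻ x, u x ^ (2:ℝ) * w x) ^ (1/2 : ℝ) * (∫⁻ x, w x) ^ (1/2 : ℝ) := by
  have h := lint_CS (fun x => u x * w x ^ (1/2:ℝ)) (fun x => w x ^ (1/2:ℝ))
    (hu.mul (hw.pow_const _)) (hw.pow_const _)
  have h1 : ∫⁻ x, u x * w x = ∫⁻ x, (u x * w x ^ (1/2:ℝ)) * w x ^ (1/2:ℝ) :=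
    lintegral_congr fun x => by rw [mul_assoc, sqrt_mul_self]
  have h2 : ∫⁻ x, (u x * w x ^ (1/2:ℝ)) ^ (2:ℝ) = ∫⁻ x, u x ^ (2:ℝ) * w x :=
    lintegral_congr fun x => by
      rw [ENNReal.mul_rpow_of_nonneg _ _ (by norm_num : (0:ℝ) ≤ 2), sq_sqrt]
  have h3 : ∫⁻ x, (w x ^ (1/2:ℝ)) ^ (2:ℝ) = ∫⁻ x, w x :=
    lintegral_congr fun x => sq_sqrt _
  rw [h1]
  rw [h2, h3] at h
  exact h





/-- Measurable indicator majorant for an adapted bump at scale `M`. -/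
def Psi (M : ℝ) : ℝ → ℝ≥0∞ := fun x =>
  (Set.Icc (-(2*M)) (2*M)).indicator (fun _ => (1:ℝ≥0∞)) x

lemma Psi_meas (M : ℝ) : Measurable (Psi M) :=
  measurable_const.indicator measurableSet_Icc

lemma Psi_le_one (M : ℝ) (x : ℝ) : Psi M x ≤ 1 := by
  unfold Psi
  by_cases h : x ∈ Set.Icc (-(2*M)) (2*M) <;> simp [h]

lemma Psi_ne_top (M : ℝ) (x : ℝ) : Psi M x ≠ ∞ :=
  ne_top_of_le_ne_top ENNReal.one_ne_top (Psi_le_one M x)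

lemma lint_Psi (M : ℝ) : ∫⁻ x, Psi M x = ENNReal.ofReal (4*M) := by
  unfold Psi
  rw [lintegral_indicator measurableSet_Icc, setLIntegral_const, one_mul, Real.volume_Icc]
  congr 1
  ring

lemma Psi_eq_zero (M : ℝ) {x : ℝ} (h : 2*M < |x|) : Psi M x = 0 := by
  unfold Psi
  apply Set.indicator_of_notMem
  intro hx
  rw [Set.mem_Icc] at hx
  have : |x| ≤ 2*M := abs_le.mpr ⟨by linarith [hx.1], hx.2⟩
  linarith

lemma ofReal_le_Psi (M : ℝ) (φ : ℝ → ℝ) (hb : ∀ ξ, 0 ≤ φ ξ ∧ φ ξ ≤ 1)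
    (hs : ∀ ξ, φ ξ ≠ 0 → M/2 ≤ |ξ| ∧ |ξ| ≤ 2*M) (x : ℝ) :
    ENNReal.ofReal (φ x) ≤ Psi M x := by
  by_cases h : φ x = 0
  · simp [h]
  · have hx := (hs x h).2
    have hmem : x ∈ Set.Icc (-(2*M)) (2*M) := by
      rw [Set.mem_Icc]
      constructor <;> [skip; skip] <;> cases' abs_le.mp hx with h1 h2 <;> linarith
    unfold Psi
    rw [Set.indicator_of_mem hmem]
    exact ENNReal.ofReal_le_one.mpr (hb x).2

/-- The convolution-type kernel combining the `M4` and `M7` bumps. -/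
def Dfun (M4 M7 : ℝ) : ℝ → ℝ≥0∞ := fun w => ∫⁻ t, Psi M4 t * Psi M7 (-(w + t))

lemma Dfun_meas (M4 M7 : ℝ) : Measurable (Dfun M4 M7) := by
  apply Measurable.lintegral_prod_right (f := fun w t => Psi M4 t * Psi M7 (-(w + t)))
  exact ((Psi_meas M4).comp measurable_snd).mul
    ((Psi_meas M7).comp ((measurable_fst.add measurable_snd).neg))

lemma Dfun_le (M4 M7 : ℝ) (w : ℝ) :
    Dfun M4 M7 w ≤ min (ENNReal.ofReal (4*M4)) (ENNReal.ofReal (4*M7)) := by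
  refine le_min ?_ ?_
  · calc ∫⁻ t, Psi M4 t * Psi M7 (-(w + t))
        ≤ ∫⁻ t, Psi M4 t * 1 :=
          lintegral_mono fun t => mul_le_mul_right (Psi_le_one _ _) _
      _ = ENNReal.ofReal (4*M4) := by
          simp only [mul_one]; exact lint_Psi M4
  · calc ∫⁻ t, Psi M4 t * Psi M7 (-(w + t))
        ≤ ∫⁻ t, 1 * Psi M7 (-(w + t)) :=
          lintegral_mono fun t => mul_le_mul_left (Psi_le_one _ _) _
      _ = ∫⁻ t, Psi M7 (-w - t) := by
          refine lintegral_congr fun t => ?_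
          rw [one_mul]
          congr 1
          ring
      _ = ENNReal.ofReal (4*M7) := by rw [lint_reflect (Psi M7) (-w)]; exact lint_Psi M7

lemma Dfun_eq_zero (M4 M7 : ℝ) {w : ℝ} (hw : 2*M4 + 2*M7 < |w|) : Dfun M4 M7 w = 0 := by
  unfold Dfun
  rw [← lintegral_zero]
  refine lintegral_congr fun t => ?_
  by_cases h4 : |t| ≤ 2*M4
  · have : 2*M7 < |(-(w + t))| := by
      rw [abs_neg]
      have h3 := abs_sub_abs_le_abs_sub w (-t)
      rw [abs_neg] at h3
      have h2 : w - -t = w + t := by ring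
      rw [h2] at h3
      linarith
    rw [Psi_eq_zero M7 this, mul_zero]
  · rw [Psi_eq_zero M4 (not_le.mp h4), zero_mul]

lemma lint_sqrt_Dfun (M4 M7 : ℝ) (hM4 : 0 < M4) (hM7 : 0 < M7) :
    ∫⁻ w, (Dfun M4 M7 w) ^ (1/2 : ℝ) ≤
      (min (ENNReal.ofReal (4*M4)) (ENNReal.ofReal (4*M7))) ^ (1/2 : ℝ) *
        ENNReal.ofReal (4*M4 + 4*M7) := by
  set m := min (ENNReal.ofReal (4*M4)) (ENNReal.ofReal (4*M7)) with hm
  calc ∫⁻ w, (Dfun M4 M7 w) ^ (1/2 : ℝ)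
      ≤ ∫⁻ w, (Set.Icc (-(2*M4 + 2*M7)) (2*M4 + 2*M7)).indicator
          (fun _ => m ^ (1/2:ℝ)) w := by
        refine lintegral_mono fun w => ?_
        by_cases hw : w ∈ Set.Icc (-(2*M4 + 2*M7)) (2*M4 + 2*M7)
        · rw [Set.indicator_of_mem hw]
          exact ENNReal.rpow_le_rpow (Dfun_le M4 M7 w) (by norm_num)
        · have : 2*M4 + 2*M7 < |w| := by
            rw [Set.mem_Icc] at hw
            rcases not_and_or.mp hw with h | h
            · rw [abs_of_neg (by linarith [not_le.mp h])]
              linarith [not_le.mp h]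
            · rw [abs_of_pos (by linarith [not_le.mp h])]
              exact not_le.mp h
          rw [Dfun_eq_zero M4 M7 this, ENNReal.zero_rpow_of_pos (by norm_num)]
          exact zero_le
    _ = m ^ (1/2:ℝ) * ENNReal.ofReal (4*M4 + 4*M7) := by
        rw [lintegral_indicator measurableSet_Icc, setLIntegral_const, Real.volume_Icc]
        congr 1
        ring_nf



/-- `Efun` is the square-root of the kernel `Dfun`. -/
def Efun (M4 M7 : ℝ) (w : ℝ) : ℝ≥0∞ := Dfun M4 M7 w ^ (1/2 : ℝ)

lemma Efun_meas (M4 M7 : ℝ) : Measurable (Efun M4 M7) :=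
  (Dfun_meas M4 M7).pow measurable_const

lemma Efun_le (M4 M7 : ℝ) (w : ℝ) :
    Efun M4 M7 w ≤ (min (ENNReal.ofReal (4*M4)) (ENNReal.ofReal (4*M7))) ^ (1/2 : ℝ) :=
  ENNReal.rpow_le_rpow (Dfun_le M4 M7 w) (by norm_num)

lemma min_half_ne_top (M4 M7 : ℝ) :
    (min (ENNReal.ofReal (4*M4)) (ENNReal.ofReal (4*M7))) ^ (1/2 : ℝ) ≠ ∞ :=
  ENNReal.rpow_ne_top_of_nonneg (by norm_num)
    (ne_top_of_le_ne_top ENNReal.ofReal_ne_top (min_le_left _ _))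

lemma Efun_ne_top (M4 M7 : ℝ) (w : ℝ) : Efun M4 M7 w ≠ ∞ :=
  ne_top_of_le_ne_top (min_half_ne_top M4 M7) (Efun_le M4 M7 w)

lemma lint_Efun (M4 M7 : ℝ) (hM4 : 0 < M4) (hM7 : 0 < M7) :
    ∫⁻ w, Efun M4 M7 w ≤
      (min (ENNReal.ofReal (4*M4)) (ENNReal.ofReal (4*M7))) ^ (1/2 : ℝ) *
        ENNReal.ofReal (4*M4 + 4*M7) :=
  lint_sqrt_Dfun M4 M7 hM4 hM7

lemma lint_Efun_ne_top (M4 M7 : ℝ) (hM4 : 0 < M4) (hM7 : 0 < M7) :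
    (∫⁻ w, Efun M4 M7 w) ≠ ∞ :=
  ne_top_of_le_ne_top (ENNReal.mul_ne_top (min_half_ne_top M4 M7) ENNReal.ofReal_ne_top)
    (lint_Efun M4 M7 hM4 hM7)

/-- `Gfun` : the `ξ4`-layer auxiliary function. -/
def Gfun (M4 M7 : ℝ) (h4 : ℝ → ℝ≥0∞) (w : ℝ) : ℝ≥0∞ :=
  ∫⁻ x, h4 x ^ (2:ℝ) * Efun M4 M7 (w + x)

lemma Gfun_meas (M4 M7 : ℝ) (h4 : ℝ → ℝ≥0∞) (hm4 : Measurable h4) :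
    Measurable (Gfun M4 M7 h4) :=
  Measurable.lintegral_prod_right (f := fun w x => h4 x ^ (2:ℝ) * Efun M4 M7 (w + x))
    (((hm4.comp measurable_snd).pow measurable_const).mul
      ((Efun_meas M4 M7).comp (measurable_fst.add measurable_snd)))

lemma Gfun_le (M4 M7 : ℝ) (h4 : ℝ → ℝ≥0∞) (w : ℝ) :
    Gfun M4 M7 h4 w ≤ (∫⁻ x, h4 x ^ (2:ℝ)) *
      (min (ENNReal.ofReal (4*M4)) (ENNReal.ofReal (4*M7))) ^ (1/2 : ℝ) := by
  calc Gfun M4 M7 h4 w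
      ≤ ∫⁻ x, h4 x ^ (2:ℝ) * (min (ENNReal.ofReal (4*M4)) (ENNReal.ofReal (4*M7))) ^ (1/2:ℝ) :=
        lintegral_mono fun x => mul_le_mul_right (Efun_le M4 M7 _) _
    _ = _ := lintegral_mul_const' _ _ (min_half_ne_top M4 M7)

lemma Gfun_ne_top (M4 M7 : ℝ) (h4 : ℝ → ℝ≥0∞) (hq4 : (∫⁻ x, h4 x ^ (2:ℝ)) ≠ ∞) (w : ℝ) :
    Gfun M4 M7 h4 w ≠ ∞ :=
  ne_top_of_le_ne_top (ENNReal.mul_ne_top hq4 (min_half_ne_top M4 M7)) (Gfun_le M4 M7 h4 w)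

lemma lint_Gfun (M4 M7 : ℝ) (hM4 : 0 < M4) (hM7 : 0 < M7) (h4 : ℝ → ℝ≥0∞)
    (hm4 : Measurable h4) (ht4 : ∀ x, h4 x ≠ ∞) :
    ∫⁻ w, Gfun M4 M7 h4 w = (∫⁻ x, h4 x ^ (2:ℝ)) * ∫⁻ w, Efun M4 M7 w := by
  calc ∫⁻ w, Gfun M4 M7 h4 w
      = ∫⁻ x, ∫⁻ w, h4 x ^ (2:ℝ) * Efun M4 M7 (w + x) := by
        refine lintegral_lintegral_swap ?_
        exact (((hm4.comp measurable_snd).pow measurable_const).mul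
          ((Efun_meas M4 M7).comp (measurable_fst.add measurable_snd))).aemeasurable
    _ = ∫⁻ x, h4 x ^ (2:ℝ) * ∫⁻ w, Efun M4 M7 w := by
        refine lintegral_congr fun x => ?_
        rw [lintegral_const_mul' _ _ (ENNReal.rpow_ne_top_of_nonneg (by norm_num) (ht4 x))]
        congr 1
        calc ∫⁻ w, Efun M4 M7 (w + x) = ∫⁻ w, Efun M4 M7 (x + w) :=
              lintegral_congr fun w => by rw [add_comm]
          _ = ∫⁻ w, Efun M4 M7 w := lint_shift _ x
    _ = _ := lintegral_mul_const' _ _ (lint_Efun_ne_top M4 M7 hM4 hM7)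

/-- `Kfun` : the `ξ1`-layer auxiliary function. -/
def Kfun (M1 M4 M7 : ℝ) (h4 : ℝ → ℝ≥0∞) (w : ℝ) : ℝ≥0∞ :=
  ∫⁻ u, Psi M1 u * Gfun M4 M7 h4 (w + u)

lemma Kfun_meas (M1 M4 M7 : ℝ) (h4 : ℝ → ℝ≥0∞) (hm4 : Measurable h4) :
    Measurable (Kfun M1 M4 M7 h4) :=
  Measurable.lintegral_prod_right (f := fun w u => Psi M1 u * Gfun M4 M7 h4 (w + u))
    (((Psi_meas M1).comp measurable_snd).mul
      ((Gfun_meas M4 M7 h4 hm4).comp (measurable_fst.add measurable_snd)))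

lemma lint_Kfun (M1 M4 M7 : ℝ) (hM4 : 0 < M4) (hM7 : 0 < M7) (h4 : ℝ → ℝ≥0∞)
    (hm4 : Measurable h4) (ht4 : ∀ x, h4 x ≠ ∞) (hq4 : (∫⁻ x, h4 x ^ (2:ℝ)) ≠ ∞) :
    ∫⁻ w, Kfun M1 M4 M7 h4 w =
      ENNReal.ofReal (4*M1) * ((∫⁻ x, h4 x ^ (2:ℝ)) * ∫⁻ w, Efun M4 M7 w) := by
  calc ∫⁻ w, Kfun M1 M4 M7 h4 w
      = ∫⁻ u, ∫⁻ w, Psi M1 u * Gfun M4 M7 h4 (w + u) := by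
        refine lintegral_lintegral_swap ?_
        exact (((Psi_meas M1).comp measurable_snd).mul
          ((Gfun_meas M4 M7 h4 hm4).comp (measurable_fst.add measurable_snd))).aemeasurable
    _ = ∫⁻ u, Psi M1 u * ∫⁻ w, Gfun M4 M7 h4 w := by
        refine lintegral_congr fun u => ?_
        rw [lintegral_const_mul' _ _ (Psi_ne_top M1 u)]
        congr 1
        calc ∫⁻ w, Gfun M4 M7 h4 (w + u) = ∫⁻ w, Gfun M4 M7 h4 (u + w) :=
              lintegral_congr fun w => by rw [add_comm]
          _ = ∫⁻ w, Gfun M4 M7 h4 w := lint_shift _ u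
    _ = (∫⁻ u, Psi M1 u) * ∫⁻ w, Gfun M4 M7 h4 w := by
        refine lintegral_mul_const' _ _ ?_
        rw [lint_Gfun M4 M7 hM4 hM7 h4 hm4 ht4]
        exact ENNReal.mul_ne_top hq4 (lint_Efun_ne_top M4 M7 hM4 hM7)
    _ = _ := by rw [lint_Psi M1, lint_Gfun M4 M7 hM4 hM7 h4 hm4 ht4]



lemma step7 (h7 h8 : ℝ → ℝ≥0∞) (hm7 : Measurable h7) (hm8 : Measurable h8) (c : ℝ) :
    ∫⁻ x, h7 x * h8 (-(c + x)) ≤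
      (∫⁻ x, h7 x ^ (2:ℝ)) ^ (1/2:ℝ) * (∫⁻ x, h8 x ^ (2:ℝ)) ^ (1/2:ℝ) := by
  have hcomp : Measurable fun x : ℝ => h8 (-(c + x)) :=
    hm8.comp (((measurable_const.add measurable_id')).neg)
  refine (lint_CS h7 _ hm7.aemeasurable hcomp.aemeasurable).trans ?_
  refine mul_le_mul_right (le_of_eq ?_) _
  congr 1
  calc ∫⁻ x, h8 (-(c + x)) ^ (2:ℝ)
      = ∫⁻ x, (fun y => h8 y ^ (2:ℝ)) (-c - x) :=
        lintegral_congr fun x => by rw [show -c - x = -(c + x) by ring]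
    _ = ∫⁻ x, h8 x ^ (2:ℝ) := lint_reflect (fun y => h8 y ^ (2:ℝ)) (-c)

lemma step6 (M4 M7 : ℝ) (h6 : ℝ → ℝ≥0∞) (hm6 : Measurable h6) (ξ1 ξ2 ξ3 ξ4 ξ5 : ℝ) :
    ∫⁻ ξ6, Psi M4 (ξ5 + ξ6) * Psi M7 (-(ξ1 + ξ2 + ξ3 + ξ4 + ξ5 + ξ6)) * h6 ξ6 ≤
      (∫⁻ ξ6, h6 ξ6 ^ (2:ℝ) *
          (Psi M4 (ξ5 + ξ6) * Psi M7 (-(ξ1 + ξ2 + ξ3 + ξ4 + ξ5 + ξ6)))) ^ (1/2:ℝ) *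
        (min (ENNReal.ofReal (4*M4)) (ENNReal.ofReal (4*M7))) ^ (1/2:ℝ) := by
  have hw : Measurable fun ξ6 => Psi M4 (ξ5 + ξ6) * Psi M7 (-(ξ1 + ξ2 + ξ3 + ξ4 + ξ5 + ξ6)) :=
    ((Psi_meas M4).comp (measurable_const.add measurable_id')).mul
      ((Psi_meas M7).comp ((measurable_const.add measurable_id').neg))
  calc ∫⁻ ξ6, Psi M4 (ξ5 + ξ6) * Psi M7 (-(ξ1 + ξ2 + ξ3 + ξ4 + ξ5 + ξ6)) * h6 ξ6
      = ∫⁻ ξ6, h6 ξ6 * (Psi M4 (ξ5 + ξ6) * Psi M7 (-(ξ1 + ξ2 + ξ3 + ξ4 + ξ5 + ξ6))) :=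
        lintegral_congr fun ξ6 => by ring
    _ ≤ (∫⁻ ξ6, h6 ξ6 ^ (2:ℝ) *
          (Psi M4 (ξ5 + ξ6) * Psi M7 (-(ξ1 + ξ2 + ξ3 + ξ4 + ξ5 + ξ6)))) ^ (1/2:ℝ) *
        (∫⁻ ξ6, Psi M4 (ξ5 + ξ6) * Psi M7 (-(ξ1 + ξ2 + ξ3 + ξ4 + ξ5 + ξ6))) ^ (1/2:ℝ) :=
        lint_CS_weight h6 _ hm6.aemeasurable hw.aemeasurable
    _ ≤ _ := by
        refine mul_le_mul_right (ENNReal.rpow_le_rpow ?_ (by norm_num)) _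
        have hid : ∫⁻ ξ6, Psi M4 (ξ5 + ξ6) * Psi M7 (-(ξ1 + ξ2 + ξ3 + ξ4 + ξ5 + ξ6)) =
            Dfun M4 M7 (ξ1 + ξ2 + ξ3 + ξ4) := by
          simp only [Dfun]
          rw [← lint_shift (fun t => Psi M4 t * Psi M7 (-(ξ1 + ξ2 + ξ3 + ξ4 + t))) ξ5]
          refine lintegral_congr fun ξ6 => ?_
          rw [show -(ξ1 + ξ2 + ξ3 + ξ4 + ξ5 + ξ6) = -(ξ1 + ξ2 + ξ3 + ξ4 + (ξ5 + ξ6)) by ring]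
        rw [hid]
        exact Dfun_le M4 M7 _

lemma step5 (M4 M7 : ℝ) (h5 h6 : ℝ → ℝ≥0∞) (hm5 : Measurable h5) (hm6 : Measurable h6)
    (hq6 : (∫⁻ x, h6 x ^ (2:ℝ)) ≠ ∞) (ξ1 ξ2 ξ3 ξ4 : ℝ) :
    ∫⁻ ξ5, h5 ξ5 * (∫⁻ ξ6, h6 ξ6 ^ (2:ℝ) *
        (Psi M4 (ξ5 + ξ6) * Psi M7 (-(ξ1 + ξ2 + ξ3 + ξ4 + ξ5 + ξ6)))) ^ (1/2:ℝ) ≤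
      (∫⁻ x, h5 x ^ (2:ℝ)) ^ (1/2:ℝ) *
        ((∫⁻ x, h6 x ^ (2:ℝ)) ^ (1/2:ℝ) * Efun M4 M7 (ξ1 + ξ2 + ξ3 + ξ4)) := by
  have hVm : Measurable fun ξ5 => ∫⁻ ξ6, h6 ξ6 ^ (2:ℝ) *
      (Psi M4 (ξ5 + ξ6) * Psi M7 (-(ξ1 + ξ2 + ξ3 + ξ4 + ξ5 + ξ6))) := by
    refine Measurable.lintegral_prod_right (f := fun ξ5 ξ6 => h6 ξ6 ^ (2:ℝ) *
      (Psi M4 (ξ5 + ξ6) * Psi M7 (-(ξ1 + ξ2 + ξ3 + ξ4 + ξ5 + ξ6)))) ?_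
    exact ((hm6.comp measurable_snd).pow measurable_const).mul
      (((Psi_meas M4).comp (measurable_fst.add measurable_snd)).mul
        ((Psi_meas M7).comp (((measurable_const.add measurable_fst).add measurable_snd).neg)))
  refine (lint_CS_sqrt h5 _ hm5.aemeasurable hVm.aemeasurable).trans ?_
  have hVint : (∫⁻ ξ5, ∫⁻ ξ6, h6 ξ6 ^ (2:ℝ) *
      (Psi M4 (ξ5 + ξ6) * Psi M7 (-(ξ1 + ξ2 + ξ3 + ξ4 + ξ5 + ξ6)))) =
      (∫⁻ x, h6 x ^ (2:ℝ)) * Dfun M4 M7 (ξ1 + ξ2 + ξ3 + ξ4) := by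
    calc (∫⁻ ξ5, ∫⁻ ξ6, h6 ξ6 ^ (2:ℝ) *
        (Psi M4 (ξ5 + ξ6) * Psi M7 (-(ξ1 + ξ2 + ξ3 + ξ4 + ξ5 + ξ6))))
        = ∫⁻ ξ5, ∫⁻ t, h6 (t - ξ5) ^ (2:ℝ) *
            (Psi M4 t * Psi M7 (-(ξ1 + ξ2 + ξ3 + ξ4 + t))) := by
          refine lintegral_congr fun ξ5 => ?_
          rw [← lint_shift (fun t => h6 (t - ξ5) ^ (2:ℝ) *
            (Psi M4 t * Psi M7 (-(ξ1 + ξ2 + ξ3 + ξ4 + t)))) ξ5]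
          refine lintegral_congr fun ξ6 => ?_
          rw [show ξ5 + ξ6 - ξ5 = ξ6 by ring,
            show -(ξ1 + ξ2 + ξ3 + ξ4 + ξ5 + ξ6) = -(ξ1 + ξ2 + ξ3 + ξ4 + (ξ5 + ξ6)) by ring]
      _ = ∫⁻ t, ∫⁻ ξ5, h6 (t - ξ5) ^ (2:ℝ) *
            (Psi M4 t * Psi M7 (-(ξ1 + ξ2 + ξ3 + ξ4 + t))) := by
          refine lintegral_lintegral_swap ?_
          exact (((hm6.comp (measurable_snd.sub measurable_fst)).pow measurable_const).mul
            (((Psi_meas M4).comp measurable_snd).mul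
              ((Psi_meas M7).comp ((measurable_const.add measurable_snd).neg)))).aemeasurable
      _ = ∫⁻ t, (Psi M4 t * Psi M7 (-(ξ1 + ξ2 + ξ3 + ξ4 + t))) * ∫⁻ x, h6 x ^ (2:ℝ) := by
          refine lintegral_congr fun t => ?_
          rw [lintegral_mul_const' _ _ (ENNReal.mul_ne_top (Psi_ne_top M4 t) (Psi_ne_top M7 _)),
            lint_reflect (fun y => h6 y ^ (2:ℝ)) t]
          exact mul_comm _ _
      _ = (∫⁻ x, h6 x ^ (2:ℝ)) * Dfun M4 M7 (ξ1 + ξ2 + ξ3 + ξ4) := by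
          rw [lintegral_mul_const' _ _ hq6, mul_comm]
          rfl
  rw [hVint, sqrt_mul]
  rfl

lemma step4 (M4 M7 : ℝ) (h4 : ℝ → ℝ≥0∞) (hm4 : Measurable h4) (c : ℝ) :
    ∫⁻ x, h4 x * Efun M4 M7 (c + x) ≤
      (Gfun M4 M7 h4 c) ^ (1/2:ℝ) * (∫⁻ w, Efun M4 M7 w) ^ (1/2:ℝ) := by
  have h := lint_CS_weight h4 (fun x => Efun M4 M7 (c + x)) hm4.aemeasurable
    ((Efun_meas M4 M7).comp (measurable_const.add measurable_id')).aemeasurable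
  rwa [lint_shift (Efun M4 M7) c] at h

/-- The `ξ3`-layer auxiliary function. -/
def Hfun (M1 M4 M7 : ℝ) (h3 h4 : ℝ → ℝ≥0∞) (ξ1 ξ2 : ℝ) : ℝ≥0∞ :=
  ∫⁻ ξ3, h3 ξ3 ^ (2:ℝ) * Gfun M4 M7 h4 (ξ1 + ξ2 + ξ3) * Psi M1 (ξ2 + ξ3)

lemma step3 (M1 M4 M7 : ℝ) (h3 h4 : ℝ → ℝ≥0∞) (hm3 : Measurable h3) (hm4 : Measurable h4)
    (ξ1 ξ2 : ℝ) :
    ∫⁻ ξ3, Psi M1 (ξ2 + ξ3) * h3 ξ3 * Gfun M4 M7 h4 (ξ1 + ξ2 + ξ3) ^ (1/2:ℝ) ≤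
      (Hfun M1 M4 M7 h3 h4 ξ1 ξ2) ^ (1/2:ℝ) * (ENNReal.ofReal (4*M1)) ^ (1/2:ℝ) := by
  have hu : Measurable fun ξ3 => h3 ξ3 * Gfun M4 M7 h4 (ξ1 + ξ2 + ξ3) ^ (1/2:ℝ) :=
    hm3.mul (((Gfun_meas M4 M7 h4 hm4).comp (measurable_const.add measurable_id')).pow
      measurable_const)
  have hw : Measurable fun ξ3 => Psi M1 (ξ2 + ξ3) :=
    (Psi_meas M1).comp (measurable_const.add measurable_id')
  calc ∫⁻ ξ3, Psi M1 (ξ2 + ξ3) * h3 ξ3 * Gfun M4 M7 h4 (ξ1 + ξ2 + ξ3) ^ (1/2:ℝ)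
      = ∫⁻ ξ3, (h3 ξ3 * Gfun M4 M7 h4 (ξ1 + ξ2 + ξ3) ^ (1/2:ℝ)) * Psi M1 (ξ2 + ξ3) :=
        lintegral_congr fun ξ3 => by ring
    _ ≤ (∫⁻ ξ3, (h3 ξ3 * Gfun M4 M7 h4 (ξ1 + ξ2 + ξ3) ^ (1/2:ℝ)) ^ (2:ℝ) *
          Psi M1 (ξ2 + ξ3)) ^ (1/2:ℝ) * (∫⁻ ξ3, Psi M1 (ξ2 + ξ3)) ^ (1/2:ℝ) :=
        lint_CS_weight _ _ hu.aemeasurable hw.aemeasurable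
    _ = _ := by
        congr 1
        · congr 1
          refine lintegral_congr fun ξ3 => ?_
          rw [ENNReal.mul_rpow_of_nonneg _ _ (by norm_num : (0:ℝ) ≤ 2), sq_sqrt]
        · rw [lint_shift (Psi M1) ξ2, lint_Psi M1]

lemma step2 (M1 M4 M7 : ℝ) (h2 h3 h4 : ℝ → ℝ≥0∞) (hm2 : Measurable h2)
    (hm3 : Measurable h3) (hm4 : Measurable h4)
    (hq3 : (∫⁻ x, h3 x ^ (2:ℝ)) ≠ ∞) (hq4 : (∫⁻ x, h4 x ^ (2:ℝ)) ≠ ∞) (ξ1 : ℝ) :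
    ∫⁻ ξ2, h2 ξ2 * (Hfun M1 M4 M7 h3 h4 ξ1 ξ2) ^ (1/2:ℝ) ≤
      (∫⁻ x, h2 x ^ (2:ℝ)) ^ (1/2:ℝ) *
        ((∫⁻ x, h3 x ^ (2:ℝ)) ^ (1/2:ℝ) * (Kfun M1 M4 M7 h4 ξ1) ^ (1/2:ℝ)) := by
  have hHm : Measurable fun ξ2 => Hfun M1 M4 M7 h3 h4 ξ1 ξ2 := by
    refine Measurable.lintegral_prod_right (f := fun ξ2 ξ3 => h3 ξ3 ^ (2:ℝ) *
      Gfun M4 M7 h4 (ξ1 + ξ2 + ξ3) * Psi M1 (ξ2 + ξ3)) ?_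
    exact (((hm3.comp measurable_snd).pow measurable_const).mul
      ((Gfun_meas M4 M7 h4 hm4).comp ((measurable_const.add measurable_fst).add
        measurable_snd))).mul ((Psi_meas M1).comp (measurable_fst.add measurable_snd))
  refine (lint_CS_sqrt h2 _ hm2.aemeasurable hHm.aemeasurable).trans ?_
  have hHint : (∫⁻ ξ2, Hfun M1 M4 M7 h3 h4 ξ1 ξ2) =
      (∫⁻ x, h3 x ^ (2:ℝ)) * Kfun M1 M4 M7 h4 ξ1 := by
    calc (∫⁻ ξ2, Hfun M1 M4 M7 h3 h4 ξ1 ξ2)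
        = ∫⁻ ξ2, ∫⁻ u, h3 (u - ξ2) ^ (2:ℝ) * Gfun M4 M7 h4 (ξ1 + u) * Psi M1 u := by
          refine lintegral_congr fun ξ2 => ?_
          rw [show Hfun M1 M4 M7 h3 h4 ξ1 ξ2 = ∫⁻ ξ3, h3 ξ3 ^ (2:ℝ) *
            Gfun M4 M7 h4 (ξ1 + ξ2 + ξ3) * Psi M1 (ξ2 + ξ3) from rfl,
            ← lint_shift (fun u => h3 (u - ξ2) ^ (2:ℝ) * Gfun M4 M7 h4 (ξ1 + u) * Psi M1 u) ξ2]
          refine lintegral_congr fun ξ3 => ?_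
          rw [show ξ2 + ξ3 - ξ2 = ξ3 by ring, show ξ1 + (ξ2 + ξ3) = ξ1 + ξ2 + ξ3 by ring]
      _ = ∫⁻ u, ∫⁻ ξ2, h3 (u - ξ2) ^ (2:ℝ) * Gfun M4 M7 h4 (ξ1 + u) * Psi M1 u := by
          refine lintegral_lintegral_swap ?_
          exact ((((hm3.comp (measurable_snd.sub measurable_fst)).pow measurable_const).mul
            ((Gfun_meas M4 M7 h4 hm4).comp (measurable_const.add measurable_snd))).mul
            ((Psi_meas M1).comp measurable_snd)).aemeasurable
      _ = ∫⁻ u, (Gfun M4 M7 h4 (ξ1 + u) * Psi M1 u) * ∫⁻ x, h3 x ^ (2:ℝ) := by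
          refine lintegral_congr fun u => ?_
          calc ∫⁻ ξ2, h3 (u - ξ2) ^ (2:ℝ) * Gfun M4 M7 h4 (ξ1 + u) * Psi M1 u
              = ∫⁻ ξ2, h3 (u - ξ2) ^ (2:ℝ) * (Gfun M4 M7 h4 (ξ1 + u) * Psi M1 u) :=
                lintegral_congr fun ξ2 => by ring
            _ = (∫⁻ ξ2, h3 (u - ξ2) ^ (2:ℝ)) * (Gfun M4 M7 h4 (ξ1 + u) * Psi M1 u) :=
                lintegral_mul_const' _ _
                  (ENNReal.mul_ne_top (Gfun_ne_top M4 M7 h4 hq4 _) (Psi_ne_top M1 u))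
            _ = _ := by rw [lint_reflect (fun y => h3 y ^ (2:ℝ)) u, mul_comm]
      _ = (∫⁻ u, Psi M1 u * Gfun M4 M7 h4 (ξ1 + u)) * ∫⁻ x, h3 x ^ (2:ℝ) := by
          rw [lintegral_mul_const' _ _ hq3]
          congr 1
          exact lintegral_congr fun u => by ring
      _ = (∫⁻ x, h3 x ^ (2:ℝ)) * Kfun M1 M4 M7 h4 ξ1 := by rw [mul_comm]; rfl
  rw [hHint, sqrt_mul]

lemma step1 (M1 M4 M7 : ℝ) (hM4 : 0 < M4) (hM7 : 0 < M7) (h1 h4 : ℝ → ℝ≥0∞)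
    (hm1 : Measurable h1) (hm4 : Measurable h4) (ht4 : ∀ x, h4 x ≠ ∞)
    (hq4 : (∫⁻ x, h4 x ^ (2:ℝ)) ≠ ∞) :
    ∫⁻ ξ1, h1 ξ1 * (Kfun M1 M4 M7 h4 ξ1) ^ (1/2:ℝ) ≤
      (∫⁻ x, h1 x ^ (2:ℝ)) ^ (1/2:ℝ) *
        (ENNReal.ofReal (4*M1) * ((∫⁻ x, h4 x ^ (2:ℝ)) * ∫⁻ w, Efun M4 M7 w)) ^ (1/2:ℝ) := by
  refine (lint_CS_sqrt h1 _ hm1.aemeasurable (Kfun_meas M1 M4 M7 h4 hm4).aemeasurable).trans ?_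
  rw [lint_Kfun M1 M4 M7 hM4 hM7 h4 hm4 ht4 hq4]

theorem aux_bound (M1 M4 M7 : ℝ) (hM1 : 0 < M1) (hM4 : 0 < M4) (hM7 : 0 < M7)
    (h1 h2 h3 h4 h5 h6 h7 h8 : ℝ → ℝ≥0∞)
    (hm1 : Measurable h1) (hm2 : Measurable h2) (hm3 : Measurable h3) (hm4 : Measurable h4)
    (hm5 : Measurable h5) (hm6 : Measurable h6) (hm7 : Measurable h7) (hm8 : Measurable h8)
    (ht1 : ∀ x, h1 x ≠ ∞) (ht2 : ∀ x, h2 x ≠ ∞) (ht3 : ∀ x, h3 x ≠ ∞) (ht4 : ∀ x, h4 x ≠ ∞)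
    (ht5 : ∀ x, h5 x ≠ ∞) (ht6 : ∀ x, h6 x ≠ ∞)
    (hq2 : (∫⁻ x, h2 x ^ (2:ℝ)) ≠ ∞) (hq3 : (∫⁻ x, h3 x ^ (2:ℝ)) ≠ ∞)
    (hq4 : (∫⁻ x, h4 x ^ (2:ℝ)) ≠ ∞) (hq5 : (∫⁻ x, h5 x ^ (2:ℝ)) ≠ ∞)
    (hq6 : (∫⁻ x, h6 x ^ (2:ℝ)) ≠ ∞) (hq7 : (∫⁻ x, h7 x ^ (2:ℝ)) ≠ ∞)
    (hq8 : (∫⁻ x, h8 x ^ (2:ℝ)) ≠ ∞) :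
    (∫⁻ ξ1, ∫⁻ ξ2, ∫⁻ ξ3, ∫⁻ ξ4, ∫⁻ ξ5, ∫⁻ ξ6, ∫⁻ ξ7,
      (h1 ξ1 * h2 ξ2 * Psi M1 (ξ2 + ξ3) * h3 ξ3 * h4 ξ4 * h5 ξ5 * Psi M4 (ξ5 + ξ6) *
        Psi M7 (-(ξ1 + ξ2 + ξ3 + ξ4 + ξ5 + ξ6)) * h6 ξ6) *
        (h7 ξ7 * h8 (-(ξ1 + ξ2 + ξ3 + ξ4 + ξ5 + ξ6 + ξ7)))) ≤
    2 * ENNReal.ofReal (4*M1) * ENNReal.ofReal (4*M4) * ENNReal.ofReal (4*M7) *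
      ((∫⁻ x, h1 x ^ (2:ℝ)) ^ (1/2:ℝ) * (∫⁻ x, h2 x ^ (2:ℝ)) ^ (1/2:ℝ) *
       (∫⁻ x, h3 x ^ (2:ℝ)) ^ (1/2:ℝ) * (∫⁻ x, h4 x ^ (2:ℝ)) ^ (1/2:ℝ) *
       (∫⁻ x, h5 x ^ (2:ℝ)) ^ (1/2:ℝ) * (∫⁻ x, h6 x ^ (2:ℝ)) ^ (1/2:ℝ) *
       (∫⁻ x, h7 x ^ (2:ℝ)) ^ (1/2:ℝ) * (∫⁻ x, h8 x ^ (2:ℝ)) ^ (1/2:ℝ)) := by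
  have hn2 : (∫⁻ x, h2 x ^ (2:ℝ)) ^ (1/2:ℝ) ≠ ∞ :=
    ENNReal.rpow_ne_top_of_nonneg (by norm_num) hq2
  have hn3 : (∫⁻ x, h3 x ^ (2:ℝ)) ^ (1/2:ℝ) ≠ ∞ :=
    ENNReal.rpow_ne_top_of_nonneg (by norm_num) hq3
  have hn5 : (∫⁻ x, h5 x ^ (2:ℝ)) ^ (1/2:ℝ) ≠ ∞ :=
    ENNReal.rpow_ne_top_of_nonneg (by norm_num) hq5
  have hn6 : (∫⁻ x, h6 x ^ (2:ℝ)) ^ (1/2:ℝ) ≠ ∞ :=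
    ENNReal.rpow_ne_top_of_nonneg (by norm_num) hq6
  have hn7 : (∫⁻ x, h7 x ^ (2:ℝ)) ^ (1/2:ℝ) ≠ ∞ :=
    ENNReal.rpow_ne_top_of_nonneg (by norm_num) hq7
  have hn8 : (∫⁻ x, h8 x ^ (2:ℝ)) ^ (1/2:ℝ) ≠ ∞ :=
    ENNReal.rpow_ne_top_of_nonneg (by norm_num) hq8
  have hms := min_half_ne_top M4 M7
  have hIEne := lint_Efun_ne_top M4 M7 hM4 hM7
  have hIEs : ((∫⁻ w, Efun M4 M7 w) ^ (1/2:ℝ)) ≠ ∞ :=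
    ENNReal.rpow_ne_top_of_nonneg (by norm_num) hIEne
  have hL1s : ((ENNReal.ofReal (4*M1)) ^ (1/2:ℝ)) ≠ ∞ :=
    ENNReal.rpow_ne_top_of_nonneg (by norm_num) ENNReal.ofReal_ne_top
  -- Level 7
  have T7 : ∀ ξ1 ξ2 ξ3 ξ4 ξ5 ξ6 : ℝ,
      (∫⁻ ξ7, (h1 ξ1 * h2 ξ2 * Psi M1 (ξ2 + ξ3) * h3 ξ3 * h4 ξ4 * h5 ξ5 * Psi M4 (ξ5 + ξ6) *
        Psi M7 (-(ξ1 + ξ2 + ξ3 + ξ4 + ξ5 + ξ6)) * h6 ξ6) *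
        (h7 ξ7 * h8 (-(ξ1 + ξ2 + ξ3 + ξ4 + ξ5 + ξ6 + ξ7)))) ≤
      (h1 ξ1 * h2 ξ2 * Psi M1 (ξ2 + ξ3) * h3 ξ3 * h4 ξ4 * h5 ξ5 * Psi M4 (ξ5 + ξ6) *
        Psi M7 (-(ξ1 + ξ2 + ξ3 + ξ4 + ξ5 + ξ6)) * h6 ξ6) *
        ((∫⁻ x, h7 x ^ (2:ℝ)) ^ (1/2:ℝ) * (∫⁻ x, h8 x ^ (2:ℝ)) ^ (1/2:ℝ)) := by
    intro ξ1 ξ2 ξ3 ξ4 ξ5 ξ6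
    have hC : (h1 ξ1 * h2 ξ2 * Psi M1 (ξ2 + ξ3) * h3 ξ3 * h4 ξ4 * h5 ξ5 * Psi M4 (ξ5 + ξ6) *
        Psi M7 (-(ξ1 + ξ2 + ξ3 + ξ4 + ξ5 + ξ6)) * h6 ξ6) ≠ ∞ := by
      refine ENNReal.mul_ne_top ?_ (ht6 ξ6)
      refine ENNReal.mul_ne_top ?_ (Psi_ne_top M7 _)
      refine ENNReal.mul_ne_top ?_ (Psi_ne_top M4 _)
      refine ENNReal.mul_ne_top ?_ (ht5 ξ5)
      refine ENNReal.mul_ne_top ?_ (ht4 ξ4)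
      refine ENNReal.mul_ne_top ?_ (ht3 ξ3)
      refine ENNReal.mul_ne_top ?_ (Psi_ne_top M1 _)
      exact ENNReal.mul_ne_top (ht1 ξ1) (ht2 ξ2)
    rw [lintegral_const_mul' _ _ hC]
    refine mul_le_mul_right ?_ _
    calc ∫⁻ ξ7, h7 ξ7 * h8 (-(ξ1 + ξ2 + ξ3 + ξ4 + ξ5 + ξ6 + ξ7))
        = ∫⁻ ξ7, h7 ξ7 * h8 (-((ξ1 + ξ2 + ξ3 + ξ4 + ξ5 + ξ6) + ξ7)) :=
          lintegral_congr fun ξ7 => by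
            rw [show -(ξ1 + ξ2 + ξ3 + ξ4 + ξ5 + ξ6 + ξ7) =
              -((ξ1 + ξ2 + ξ3 + ξ4 + ξ5 + ξ6) + ξ7) by ring]
      _ ≤ _ := step7 h7 h8 hm7 hm8 _
  -- Level 6
  have T6 : ∀ ξ1 ξ2 ξ3 ξ4 ξ5 : ℝ,
      (∫⁻ ξ6, ∫⁻ ξ7, (h1 ξ1 * h2 ξ2 * Psi M1 (ξ2 + ξ3) * h3 ξ3 * h4 ξ4 * h5 ξ5 *
        Psi M4 (ξ5 + ξ6) * Psi M7 (-(ξ1 + ξ2 + ξ3 + ξ4 + ξ5 + ξ6)) * h6 ξ6) *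
        (h7 ξ7 * h8 (-(ξ1 + ξ2 + ξ3 + ξ4 + ξ5 + ξ6 + ξ7)))) ≤
      (h1 ξ1 * h2 ξ2 * Psi M1 (ξ2 + ξ3) * h3 ξ3 * h4 ξ4 * h5 ξ5) *
        (((∫⁻ x, h7 x ^ (2:ℝ)) ^ (1/2:ℝ) * (∫⁻ x, h8 x ^ (2:ℝ)) ^ (1/2:ℝ)) *
          (min (ENNReal.ofReal (4*M4)) (ENNReal.ofReal (4*M7))) ^ (1/2:ℝ) *
          ((∫⁻ ξ6, h6 ξ6 ^ (2:ℝ) *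
            (Psi M4 (ξ5 + ξ6) * Psi M7 (-(ξ1 + ξ2 + ξ3 + ξ4 + ξ5 + ξ6)))) ^ (1/2:ℝ))) := by
    intro ξ1 ξ2 ξ3 ξ4 ξ5
    have hCne : ((h1 ξ1 * h2 ξ2 * Psi M1 (ξ2 + ξ3) * h3 ξ3 * h4 ξ4 * h5 ξ5) *
        ((∫⁻ x, h7 x ^ (2:ℝ)) ^ (1/2:ℝ) * (∫⁻ x, h8 x ^ (2:ℝ)) ^ (1/2:ℝ))) ≠ ∞ := by
      refine ENNReal.mul_ne_top ?_ (ENNReal.mul_ne_top hn7 hn8)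
      refine ENNReal.mul_ne_top ?_ (ht5 ξ5)
      refine ENNReal.mul_ne_top ?_ (ht4 ξ4)
      refine ENNReal.mul_ne_top ?_ (ht3 ξ3)
      refine ENNReal.mul_ne_top ?_ (Psi_ne_top M1 _)
      exact ENNReal.mul_ne_top (ht1 ξ1) (ht2 ξ2)
    calc (∫⁻ ξ6, ∫⁻ ξ7, (h1 ξ1 * h2 ξ2 * Psi M1 (ξ2 + ξ3) * h3 ξ3 * h4 ξ4 * h5 ξ5 *
        Psi M4 (ξ5 + ξ6) * Psi M7 (-(ξ1 + ξ2 + ξ3 + ξ4 + ξ5 + ξ6)) * h6 ξ6) *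
        (h7 ξ7 * h8 (-(ξ1 + ξ2 + ξ3 + ξ4 + ξ5 + ξ6 + ξ7))))
        ≤ ∫⁻ ξ6, (h1 ξ1 * h2 ξ2 * Psi M1 (ξ2 + ξ3) * h3 ξ3 * h4 ξ4 * h5 ξ5 *
            Psi M4 (ξ5 + ξ6) * Psi M7 (-(ξ1 + ξ2 + ξ3 + ξ4 + ξ5 + ξ6)) * h6 ξ6) *
            ((∫⁻ x, h7 x ^ (2:ℝ)) ^ (1/2:ℝ) * (∫⁻ x, h8 x ^ (2:ℝ)) ^ (1/2:ℝ)) :=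
          lintegral_mono fun ξ6 => T7 ξ1 ξ2 ξ3 ξ4 ξ5 ξ6
      _ = ∫⁻ ξ6, ((h1 ξ1 * h2 ξ2 * Psi M1 (ξ2 + ξ3) * h3 ξ3 * h4 ξ4 * h5 ξ5) *
            ((∫⁻ x, h7 x ^ (2:ℝ)) ^ (1/2:ℝ) * (∫⁻ x, h8 x ^ (2:ℝ)) ^ (1/2:ℝ))) *
            (Psi M4 (ξ5 + ξ6) * Psi M7 (-(ξ1 + ξ2 + ξ3 + ξ4 + ξ5 + ξ6)) * h6 ξ6) :=
          lintegral_congr fun ξ6 => by ring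
      _ = ((h1 ξ1 * h2 ξ2 * Psi M1 (ξ2 + ξ3) * h3 ξ3 * h4 ξ4 * h5 ξ5) *
            ((∫⁻ x, h7 x ^ (2:ℝ)) ^ (1/2:ℝ) * (∫⁻ x, h8 x ^ (2:ℝ)) ^ (1/2:ℝ))) *
            ∫⁻ ξ6, Psi M4 (ξ5 + ξ6) * Psi M7 (-(ξ1 + ξ2 + ξ3 + ξ4 + ξ5 + ξ6)) * h6 ξ6 :=
          lintegral_const_mul' _ _ hCne
      _ ≤ ((h1 ξ1 * h2 ξ2 * Psi M1 (ξ2 + ξ3) * h3 ξ3 * h4 ξ4 * h5 ξ5) *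
            ((∫⁻ x, h7 x ^ (2:ℝ)) ^ (1/2:ℝ) * (∫⁻ x, h8 x ^ (2:ℝ)) ^ (1/2:ℝ))) *
            ((∫⁻ ξ6, h6 ξ6 ^ (2:ℝ) *
              (Psi M4 (ξ5 + ξ6) * Psi M7 (-(ξ1 + ξ2 + ξ3 + ξ4 + ξ5 + ξ6)))) ^ (1/2:ℝ) *
              (min (ENNReal.ofReal (4*M4)) (ENNReal.ofReal (4*M7))) ^ (1/2:ℝ)) :=
          mul_le_mul_right (step6 M4 M7 h6 hm6 ξ1 ξ2 ξ3 ξ4 ξ5) _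
      _ = _ := by ring
  -- Level 5
  have T5 : ∀ ξ1 ξ2 ξ3 ξ4 : ℝ,
      (∫⁻ ξ5, ∫⁻ ξ6, ∫⁻ ξ7, (h1 ξ1 * h2 ξ2 * Psi M1 (ξ2 + ξ3) * h3 ξ3 * h4 ξ4 * h5 ξ5 *
        Psi M4 (ξ5 + ξ6) * Psi M7 (-(ξ1 + ξ2 + ξ3 + ξ4 + ξ5 + ξ6)) * h6 ξ6) *
        (h7 ξ7 * h8 (-(ξ1 + ξ2 + ξ3 + ξ4 + ξ5 + ξ6 + ξ7)))) ≤
      (h1 ξ1 * h2 ξ2 * Psi M1 (ξ2 + ξ3) * h3 ξ3 * h4 ξ4) *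
        (((∫⁻ x, h7 x ^ (2:ℝ)) ^ (1/2:ℝ) * (∫⁻ x, h8 x ^ (2:ℝ)) ^ (1/2:ℝ)) *
          (min (ENNReal.ofReal (4*M4)) (ENNReal.ofReal (4*M7))) ^ (1/2:ℝ) *
          ((∫⁻ x, h5 x ^ (2:ℝ)) ^ (1/2:ℝ) * ((∫⁻ x, h6 x ^ (2:ℝ)) ^ (1/2:ℝ) *
            Efun M4 M7 (ξ1 + ξ2 + ξ3 + ξ4)))) := by
    intro ξ1 ξ2 ξ3 ξ4
    have hCne : ((h1 ξ1 * h2 ξ2 * Psi M1 (ξ2 + ξ3) * h3 ξ3 * h4 ξ4) *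
        (((∫⁻ x, h7 x ^ (2:ℝ)) ^ (1/2:ℝ) * (∫⁻ x, h8 x ^ (2:ℝ)) ^ (1/2:ℝ)) *
          (min (ENNReal.ofReal (4*M4)) (ENNReal.ofReal (4*M7))) ^ (1/2:ℝ))) ≠ ∞ := by
      refine ENNReal.mul_ne_top ?_ (ENNReal.mul_ne_top (ENNReal.mul_ne_top hn7 hn8) hms)
      refine ENNReal.mul_ne_top ?_ (ht4 ξ4)
      refine ENNReal.mul_ne_top ?_ (ht3 ξ3)
      refine ENNReal.mul_ne_top ?_ (Psi_ne_top M1 _)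
      exact ENNReal.mul_ne_top (ht1 ξ1) (ht2 ξ2)
    calc (∫⁻ ξ5, ∫⁻ ξ6, ∫⁻ ξ7, (h1 ξ1 * h2 ξ2 * Psi M1 (ξ2 + ξ3) * h3 ξ3 * h4 ξ4 * h5 ξ5 *
        Psi M4 (ξ5 + ξ6) * Psi M7 (-(ξ1 + ξ2 + ξ3 + ξ4 + ξ5 + ξ6)) * h6 ξ6) *
        (h7 ξ7 * h8 (-(ξ1 + ξ2 + ξ3 + ξ4 + ξ5 + ξ6 + ξ7))))
        ≤ ∫⁻ ξ5, (h1 ξ1 * h2 ξ2 * Psi M1 (ξ2 + ξ3) * h3 ξ3 * h4 ξ4 * h5 ξ5) *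
            (((∫⁻ x, h7 x ^ (2:ℝ)) ^ (1/2:ℝ) * (∫⁻ x, h8 x ^ (2:ℝ)) ^ (1/2:ℝ)) *
              (min (ENNReal.ofReal (4*M4)) (ENNReal.ofReal (4*M7))) ^ (1/2:ℝ) *
              ((∫⁻ ξ6, h6 ξ6 ^ (2:ℝ) *
                (Psi M4 (ξ5 + ξ6) * Psi M7 (-(ξ1 + ξ2 + ξ3 + ξ4 + ξ5 + ξ6)))) ^ (1/2:ℝ))) :=
          lintegral_mono fun ξ5 => T6 ξ1 ξ2 ξ3 ξ4 ξ5
      _ = ((h1 ξ1 * h2 ξ2 * Psi M1 (ξ2 + ξ3) * h3 ξ3 * h4 ξ4) *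
            (((∫⁻ x, h7 x ^ (2:ℝ)) ^ (1/2:ℝ) * (∫⁻ x, h8 x ^ (2:ℝ)) ^ (1/2:ℝ)) *
              (min (ENNReal.ofReal (4*M4)) (ENNReal.ofReal (4*M7))) ^ (1/2:ℝ))) *
            ∫⁻ ξ5, h5 ξ5 * (∫⁻ ξ6, h6 ξ6 ^ (2:ℝ) *
              (Psi M4 (ξ5 + ξ6) * Psi M7 (-(ξ1 + ξ2 + ξ3 + ξ4 + ξ5 + ξ6)))) ^ (1/2:ℝ) := by
          rw [← lintegral_const_mul' _ _ hCne]
          exact lintegral_congr fun ξ5 => by ring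
      _ ≤ ((h1 ξ1 * h2 ξ2 * Psi M1 (ξ2 + ξ3) * h3 ξ3 * h4 ξ4) *
            (((∫⁻ x, h7 x ^ (2:ℝ)) ^ (1/2:ℝ) * (∫⁻ x, h8 x ^ (2:ℝ)) ^ (1/2:ℝ)) *
              (min (ENNReal.ofReal (4*M4)) (ENNReal.ofReal (4*M7))) ^ (1/2:ℝ))) *
            ((∫⁻ x, h5 x ^ (2:ℝ)) ^ (1/2:ℝ) * ((∫⁻ x, h6 x ^ (2:ℝ)) ^ (1/2:ℝ) *
              Efun M4 M7 (ξ1 + ξ2 + ξ3 + ξ4))) :=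
          mul_le_mul_right (step5 M4 M7 h5 h6 hm5 hm6 hq6 ξ1 ξ2 ξ3 ξ4) _
      _ = _ := by ring
  -- Level 4
  have T4 : ∀ ξ1 ξ2 ξ3 : ℝ,
      (∫⁻ ξ4, ∫⁻ ξ5, ∫⁻ ξ6, ∫⁻ ξ7, (h1 ξ1 * h2 ξ2 * Psi M1 (ξ2 + ξ3) * h3 ξ3 * h4 ξ4 * h5 ξ5 *
        Psi M4 (ξ5 + ξ6) * Psi M7 (-(ξ1 + ξ2 + ξ3 + ξ4 + ξ5 + ξ6)) * h6 ξ6) *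
        (h7 ξ7 * h8 (-(ξ1 + ξ2 + ξ3 + ξ4 + ξ5 + ξ6 + ξ7)))) ≤
      (h1 ξ1 * h2 ξ2 * Psi M1 (ξ2 + ξ3) * h3 ξ3) *
        (((∫⁻ x, h7 x ^ (2:ℝ)) ^ (1/2:ℝ) * (∫⁻ x, h8 x ^ (2:ℝ)) ^ (1/2:ℝ)) *
          (min (ENNReal.ofReal (4*M4)) (ENNReal.ofReal (4*M7))) ^ (1/2:ℝ) *
          ((∫⁻ x, h5 x ^ (2:ℝ)) ^ (1/2:ℝ) * (∫⁻ x, h6 x ^ (2:ℝ)) ^ (1/2:ℝ)) *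
          ((∫⁻ w, Efun M4 M7 w) ^ (1/2:ℝ)) *
          ((Gfun M4 M7 h4 (ξ1 + ξ2 + ξ3)) ^ (1/2:ℝ))) := by
    intro ξ1 ξ2 ξ3
    have hCne : ((h1 ξ1 * h2 ξ2 * Psi M1 (ξ2 + ξ3) * h3 ξ3) *
        (((∫⁻ x, h7 x ^ (2:ℝ)) ^ (1/2:ℝ) * (∫⁻ x, h8 x ^ (2:ℝ)) ^ (1/2:ℝ)) *
          (min (ENNReal.ofReal (4*M4)) (ENNReal.ofReal (4*M7))) ^ (1/2:ℝ) *
          ((∫⁻ x, h5 x ^ (2:ℝ)) ^ (1/2:ℝ) * (∫⁻ x, h6 x ^ (2:ℝ)) ^ (1/2:ℝ)))) ≠ ∞ := by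
      refine ENNReal.mul_ne_top ?_ (ENNReal.mul_ne_top
        (ENNReal.mul_ne_top (ENNReal.mul_ne_top hn7 hn8) hms) (ENNReal.mul_ne_top hn5 hn6))
      refine ENNReal.mul_ne_top ?_ (ht3 ξ3)
      refine ENNReal.mul_ne_top ?_ (Psi_ne_top M1 _)
      exact ENNReal.mul_ne_top (ht1 ξ1) (ht2 ξ2)
    calc (∫⁻ ξ4, ∫⁻ ξ5, ∫⁻ ξ6, ∫⁻ ξ7, (h1 ξ1 * h2 ξ2 * Psi M1 (ξ2 + ξ3) * h3 ξ3 * h4 ξ4 *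
        h5 ξ5 * Psi M4 (ξ5 + ξ6) * Psi M7 (-(ξ1 + ξ2 + ξ3 + ξ4 + ξ5 + ξ6)) * h6 ξ6) *
        (h7 ξ7 * h8 (-(ξ1 + ξ2 + ξ3 + ξ4 + ξ5 + ξ6 + ξ7))))
        ≤ ∫⁻ ξ4, (h1 ξ1 * h2 ξ2 * Psi M1 (ξ2 + ξ3) * h3 ξ3 * h4 ξ4) *
            (((∫⁻ x, h7 x ^ (2:ℝ)) ^ (1/2:ℝ) * (∫⁻ x, h8 x ^ (2:ℝ)) ^ (1/2:ℝ)) *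
              (min (ENNReal.ofReal (4*M4)) (ENNReal.ofReal (4*M7))) ^ (1/2:ℝ) *
              ((∫⁻ x, h5 x ^ (2:ℝ)) ^ (1/2:ℝ) * ((∫⁻ x, h6 x ^ (2:ℝ)) ^ (1/2:ℝ) *
                Efun M4 M7 (ξ1 + ξ2 + ξ3 + ξ4)))) :=
          lintegral_mono fun ξ4 => T5 ξ1 ξ2 ξ3 ξ4
      _ = ((h1 ξ1 * h2 ξ2 * Psi M1 (ξ2 + ξ3) * h3 ξ3) *
            (((∫⁻ x, h7 x ^ (2:ℝ)) ^ (1/2:ℝ) * (∫⁻ x, h8 x ^ (2:ℝ)) ^ (1/2:ℝ)) *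
              (min (ENNReal.ofReal (4*M4)) (ENNReal.ofReal (4*M7))) ^ (1/2:ℝ) *
              ((∫⁻ x, h5 x ^ (2:ℝ)) ^ (1/2:ℝ) * (∫⁻ x, h6 x ^ (2:ℝ)) ^ (1/2:ℝ)))) *
            ∫⁻ ξ4, h4 ξ4 * Efun M4 M7 ((ξ1 + ξ2 + ξ3) + ξ4) := by
          rw [← lintegral_const_mul' _ _ hCne]
          refine lintegral_congr fun ξ4 => ?_
          rw [show (ξ1 + ξ2 + ξ3) + ξ4 = ξ1 + ξ2 + ξ3 + ξ4 by ring]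
          ring
      _ ≤ ((h1 ξ1 * h2 ξ2 * Psi M1 (ξ2 + ξ3) * h3 ξ3) *
            (((∫⁻ x, h7 x ^ (2:ℝ)) ^ (1/2:ℝ) * (∫⁻ x, h8 x ^ (2:ℝ)) ^ (1/2:ℝ)) *
              (min (ENNReal.ofReal (4*M4)) (ENNReal.ofReal (4*M7))) ^ (1/2:ℝ) *
              ((∫⁻ x, h5 x ^ (2:ℝ)) ^ (1/2:ℝ) * (∫⁻ x, h6 x ^ (2:ℝ)) ^ (1/2:ℝ)))) *
            ((Gfun M4 M7 h4 (ξ1 + ξ2 + ξ3)) ^ (1/2:ℝ) * (∫⁻ w, Efun M4 M7 w) ^ (1/2:ℝ)) :=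
          mul_le_mul_right (step4 M4 M7 h4 hm4 (ξ1 + ξ2 + ξ3)) _
      _ = _ := by ring
  -- Level 3
  have T3 : ∀ ξ1 ξ2 : ℝ,
      (∫⁻ ξ3, ∫⁻ ξ4, ∫⁻ ξ5, ∫⁻ ξ6, ∫⁻ ξ7, (h1 ξ1 * h2 ξ2 * Psi M1 (ξ2 + ξ3) * h3 ξ3 * h4 ξ4 *
        h5 ξ5 * Psi M4 (ξ5 + ξ6) * Psi M7 (-(ξ1 + ξ2 + ξ3 + ξ4 + ξ5 + ξ6)) * h6 ξ6) *
        (h7 ξ7 * h8 (-(ξ1 + ξ2 + ξ3 + ξ4 + ξ5 + ξ6 + ξ7)))) ≤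
      (h1 ξ1 * h2 ξ2) *
        (((∫⁻ x, h7 x ^ (2:ℝ)) ^ (1/2:ℝ) * (∫⁻ x, h8 x ^ (2:ℝ)) ^ (1/2:ℝ)) *
          (min (ENNReal.ofReal (4*M4)) (ENNReal.ofReal (4*M7))) ^ (1/2:ℝ) *
          ((∫⁻ x, h5 x ^ (2:ℝ)) ^ (1/2:ℝ) * (∫⁻ x, h6 x ^ (2:ℝ)) ^ (1/2:ℝ)) *
          ((∫⁻ w, Efun M4 M7 w) ^ (1/2:ℝ)) * (ENNReal.ofReal (4*M1)) ^ (1/2:ℝ) *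
          ((Hfun M1 M4 M7 h3 h4 ξ1 ξ2) ^ (1/2:ℝ))) := by
    intro ξ1 ξ2
    have hCne : ((h1 ξ1 * h2 ξ2) *
        (((∫⁻ x, h7 x ^ (2:ℝ)) ^ (1/2:ℝ) * (∫⁻ x, h8 x ^ (2:ℝ)) ^ (1/2:ℝ)) *
          (min (ENNReal.ofReal (4*M4)) (ENNReal.ofReal (4*M7))) ^ (1/2:ℝ) *
          ((∫⁻ x, h5 x ^ (2:ℝ)) ^ (1/2:ℝ) * (∫⁻ x, h6 x ^ (2:ℝ)) ^ (1/2:ℝ)) *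
          ((∫⁻ w, Efun M4 M7 w) ^ (1/2:ℝ)))) ≠ ∞ := by
      refine ENNReal.mul_ne_top (ENNReal.mul_ne_top (ht1 ξ1) (ht2 ξ2)) ?_
      refine ENNReal.mul_ne_top (ENNReal.mul_ne_top
        (ENNReal.mul_ne_top (ENNReal.mul_ne_top hn7 hn8) hms)
        (ENNReal.mul_ne_top hn5 hn6)) hIEs
    calc (∫⁻ ξ3, ∫⁻ ξ4, ∫⁻ ξ5, ∫⁻ ξ6, ∫⁻ ξ7, (h1 ξ1 * h2 ξ2 * Psi M1 (ξ2 + ξ3) * h3 ξ3 *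
        h4 ξ4 * h5 ξ5 * Psi M4 (ξ5 + ξ6) * Psi M7 (-(ξ1 + ξ2 + ξ3 + ξ4 + ξ5 + ξ6)) * h6 ξ6) *
        (h7 ξ7 * h8 (-(ξ1 + ξ2 + ξ3 + ξ4 + ξ5 + ξ6 + ξ7))))
        ≤ ∫⁻ ξ3, (h1 ξ1 * h2 ξ2 * Psi M1 (ξ2 + ξ3) * h3 ξ3) *
            (((∫⁻ x, h7 x ^ (2:ℝ)) ^ (1/2:ℝ) * (∫⁻ x, h8 x ^ (2:ℝ)) ^ (1/2:ℝ)) *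
              (min (ENNReal.ofReal (4*M4)) (ENNReal.ofReal (4*M7))) ^ (1/2:ℝ) *
              ((∫⁻ x, h5 x ^ (2:ℝ)) ^ (1/2:ℝ) * (∫⁻ x, h6 x ^ (2:ℝ)) ^ (1/2:ℝ)) *
              ((∫⁻ w, Efun M4 M7 w) ^ (1/2:ℝ)) *
              ((Gfun M4 M7 h4 (ξ1 + ξ2 + ξ3)) ^ (1/2:ℝ))) :=
          lintegral_mono fun ξ3 => T4 ξ1 ξ2 ξ3
      _ = ((h1 ξ1 * h2 ξ2) *
            (((∫⁻ x, h7 x ^ (2:ℝ)) ^ (1/2:ℝ) * (∫⁻ x, h8 x ^ (2:ℝ)) ^ (1/2:ℝ)) *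
              (min (ENNReal.ofReal (4*M4)) (ENNReal.ofReal (4*M7))) ^ (1/2:ℝ) *
              ((∫⁻ x, h5 x ^ (2:ℝ)) ^ (1/2:ℝ) * (∫⁻ x, h6 x ^ (2:ℝ)) ^ (1/2:ℝ)) *
              ((∫⁻ w, Efun M4 M7 w) ^ (1/2:ℝ)))) *
            ∫⁻ ξ3, Psi M1 (ξ2 + ξ3) * h3 ξ3 * Gfun M4 M7 h4 (ξ1 + ξ2 + ξ3) ^ (1/2:ℝ) := by
          rw [← lintegral_const_mul' _ _ hCne]
          exact lintegral_congr fun ξ3 => by ring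
      _ ≤ ((h1 ξ1 * h2 ξ2) *
            (((∫⁻ x, h7 x ^ (2:ℝ)) ^ (1/2:ℝ) * (∫⁻ x, h8 x ^ (2:ℝ)) ^ (1/2:ℝ)) *
              (min (ENNReal.ofReal (4*M4)) (ENNReal.ofReal (4*M7))) ^ (1/2:ℝ) *
              ((∫⁻ x, h5 x ^ (2:ℝ)) ^ (1/2:ℝ) * (∫⁻ x, h6 x ^ (2:ℝ)) ^ (1/2:ℝ)) *
              ((∫⁻ w, Efun M4 M7 w) ^ (1/2:ℝ)))) *
            ((Hfun M1 M4 M7 h3 h4 ξ1 ξ2) ^ (1/2:ℝ) * (ENNReal.ofReal (4*M1)) ^ (1/2:ℝ)) :=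
          mul_le_mul_right (step3 M1 M4 M7 h3 h4 hm3 hm4 ξ1 ξ2) _
      _ = _ := by ring
  -- Level 2
  have T2 : ∀ ξ1 : ℝ,
      (∫⁻ ξ2, ∫⁻ ξ3, ∫⁻ ξ4, ∫⁻ ξ5, ∫⁻ ξ6, ∫⁻ ξ7, (h1 ξ1 * h2 ξ2 * Psi M1 (ξ2 + ξ3) * h3 ξ3 *
        h4 ξ4 * h5 ξ5 * Psi M4 (ξ5 + ξ6) * Psi M7 (-(ξ1 + ξ2 + ξ3 + ξ4 + ξ5 + ξ6)) * h6 ξ6) *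
        (h7 ξ7 * h8 (-(ξ1 + ξ2 + ξ3 + ξ4 + ξ5 + ξ6 + ξ7)))) ≤
      h1 ξ1 *
        (((∫⁻ x, h7 x ^ (2:ℝ)) ^ (1/2:ℝ) * (∫⁻ x, h8 x ^ (2:ℝ)) ^ (1/2:ℝ)) *
          (min (ENNReal.ofReal (4*M4)) (ENNReal.ofReal (4*M7))) ^ (1/2:ℝ) *
          ((∫⁻ x, h5 x ^ (2:ℝ)) ^ (1/2:ℝ) * (∫⁻ x, h6 x ^ (2:ℝ)) ^ (1/2:ℝ)) *
          ((∫⁻ w, Efun M4 M7 w) ^ (1/2:ℝ)) * (ENNReal.ofReal (4*M1)) ^ (1/2:ℝ) *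
          ((∫⁻ x, h2 x ^ (2:ℝ)) ^ (1/2:ℝ) * (∫⁻ x, h3 x ^ (2:ℝ)) ^ (1/2:ℝ)) *
          ((Kfun M1 M4 M7 h4 ξ1) ^ (1/2:ℝ))) := by
    intro ξ1
    have hCne : (h1 ξ1 *
        (((∫⁻ x, h7 x ^ (2:ℝ)) ^ (1/2:ℝ) * (∫⁻ x, h8 x ^ (2:ℝ)) ^ (1/2:ℝ)) *
          (min (ENNReal.ofReal (4*M4)) (ENNReal.ofReal (4*M7))) ^ (1/2:ℝ) *
          ((∫⁻ x, h5 x ^ (2:ℝ)) ^ (1/2:ℝ) * (∫⁻ x, h6 x ^ (2:ℝ)) ^ (1/2:ℝ)) *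
          ((∫⁻ w, Efun M4 M7 w) ^ (1/2:ℝ)) * (ENNReal.ofReal (4*M1)) ^ (1/2:ℝ))) ≠ ∞ := by
      refine ENNReal.mul_ne_top (ht1 ξ1) ?_
      refine ENNReal.mul_ne_top (ENNReal.mul_ne_top (ENNReal.mul_ne_top (ENNReal.mul_ne_top
        (ENNReal.mul_ne_top hn7 hn8) hms) (ENNReal.mul_ne_top hn5 hn6)) hIEs) hL1s
    calc (∫⁻ ξ2, ∫⁻ ξ3, ∫⁻ ξ4, ∫⁻ ξ5, ∫⁻ ξ6, ∫⁻ ξ7, (h1 ξ1 * h2 ξ2 * Psi M1 (ξ2 + ξ3) *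
        h3 ξ3 * h4 ξ4 * h5 ξ5 * Psi M4 (ξ5 + ξ6) *
        Psi M7 (-(ξ1 + ξ2 + ξ3 + ξ4 + ξ5 + ξ6)) * h6 ξ6) *
        (h7 ξ7 * h8 (-(ξ1 + ξ2 + ξ3 + ξ4 + ξ5 + ξ6 + ξ7))))
        ≤ ∫⁻ ξ2, (h1 ξ1 * h2 ξ2) *
            (((∫⁻ x, h7 x ^ (2:ℝ)) ^ (1/2:ℝ) * (∫⁻ x, h8 x ^ (2:ℝ)) ^ (1/2:ℝ)) *
              (min (ENNReal.ofReal (4*M4)) (ENNReal.ofReal (4*M7))) ^ (1/2:ℝ) *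
              ((∫⁻ x, h5 x ^ (2:ℝ)) ^ (1/2:ℝ) * (∫⁻ x, h6 x ^ (2:ℝ)) ^ (1/2:ℝ)) *
              ((∫⁻ w, Efun M4 M7 w) ^ (1/2:ℝ)) * (ENNReal.ofReal (4*M1)) ^ (1/2:ℝ) *
              ((Hfun M1 M4 M7 h3 h4 ξ1 ξ2) ^ (1/2:ℝ))) :=
          lintegral_mono fun ξ2 => T3 ξ1 ξ2
      _ = (h1 ξ1 *
            (((∫⁻ x, h7 x ^ (2:ℝ)) ^ (1/2:ℝ) * (∫⁻ x, h8 x ^ (2:ℝ)) ^ (1/2:ℝ)) *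
              (min (ENNReal.ofReal (4*M4)) (ENNReal.ofReal (4*M7))) ^ (1/2:ℝ) *
              ((∫⁻ x, h5 x ^ (2:ℝ)) ^ (1/2:ℝ) * (∫⁻ x, h6 x ^ (2:ℝ)) ^ (1/2:ℝ)) *
              ((∫⁻ w, Efun M4 M7 w) ^ (1/2:ℝ)) * (ENNReal.ofReal (4*M1)) ^ (1/2:ℝ))) *
            ∫⁻ ξ2, h2 ξ2 * (Hfun M1 M4 M7 h3 h4 ξ1 ξ2) ^ (1/2:ℝ) := by
          rw [← lintegral_const_mul' _ _ hCne]
          exact lintegral_congr fun ξ2 => by ring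
      _ ≤ (h1 ξ1 *
            (((∫⁻ x, h7 x ^ (2:ℝ)) ^ (1/2:ℝ) * (∫⁻ x, h8 x ^ (2:ℝ)) ^ (1/2:ℝ)) *
              (min (ENNReal.ofReal (4*M4)) (ENNReal.ofReal (4*M7))) ^ (1/2:ℝ) *
              ((∫⁻ x, h5 x ^ (2:ℝ)) ^ (1/2:ℝ) * (∫⁻ x, h6 x ^ (2:ℝ)) ^ (1/2:ℝ)) *
              ((∫⁻ w, Efun M4 M7 w) ^ (1/2:ℝ)) * (ENNReal.ofReal (4*M1)) ^ (1/2:ℝ))) *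
            ((∫⁻ x, h2 x ^ (2:ℝ)) ^ (1/2:ℝ) * ((∫⁻ x, h3 x ^ (2:ℝ)) ^ (1/2:ℝ) *
              (Kfun M1 M4 M7 h4 ξ1) ^ (1/2:ℝ))) :=
          mul_le_mul_right (step2 M1 M4 M7 h2 h3 h4 hm2 hm3 hm4 hq3 hq4 ξ1) _
      _ = _ := by ring
  -- Level 1 and conclusion
  have hCne : (((∫⁻ x, h7 x ^ (2:ℝ)) ^ (1/2:ℝ) * (∫⁻ x, h8 x ^ (2:ℝ)) ^ (1/2:ℝ)) *
      (min (ENNReal.ofReal (4*M4)) (ENNReal.ofReal (4*M7))) ^ (1/2:ℝ) *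
      ((∫⁻ x, h5 x ^ (2:ℝ)) ^ (1/2:ℝ) * (∫⁻ x, h6 x ^ (2:ℝ)) ^ (1/2:ℝ)) *
      ((∫⁻ w, Efun M4 M7 w) ^ (1/2:ℝ)) * (ENNReal.ofReal (4*M1)) ^ (1/2:ℝ) *
      ((∫⁻ x, h2 x ^ (2:ℝ)) ^ (1/2:ℝ) * (∫⁻ x, h3 x ^ (2:ℝ)) ^ (1/2:ℝ))) ≠ ∞ := by
    refine ENNReal.mul_ne_top (ENNReal.mul_ne_top (ENNReal.mul_ne_top (ENNReal.mul_ne_top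
      (ENNReal.mul_ne_top (ENNReal.mul_ne_top hn7 hn8) hms) (ENNReal.mul_ne_top hn5 hn6))
      hIEs) hL1s) (ENNReal.mul_ne_top hn2 hn3)
  have key : (min (ENNReal.ofReal (4*M4)) (ENNReal.ofReal (4*M7))) ^ (1/2:ℝ) *
      (∫⁻ w, Efun M4 M7 w) ≤ 2 * (ENNReal.ofReal (4*M4) * ENNReal.ofReal (4*M7)) := by
    calc (min (ENNReal.ofReal (4*M4)) (ENNReal.ofReal (4*M7))) ^ (1/2:ℝ) *
        (∫⁻ w, Efun M4 M7 w)
        ≤ (min (ENNReal.ofReal (4*M4)) (ENNReal.ofReal (4*M7))) ^ (1/2:ℝ) *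
          ((min (ENNReal.ofReal (4*M4)) (ENNReal.ofReal (4*M7))) ^ (1/2:ℝ) *
            ENNReal.ofReal (4*M4 + 4*M7)) :=
          mul_le_mul_right (lint_Efun M4 M7 hM4 hM7) _
      _ = (min (ENNReal.ofReal (4*M4)) (ENNReal.ofReal (4*M7))) *
          (ENNReal.ofReal (4*M4) + ENNReal.ofReal (4*M7)) := by
          rw [← mul_assoc, sqrt_mul_self]
          congr 1
          rw [ENNReal.ofReal_add (by positivity) (by positivity)]
      _ ≤ 2 * (ENNReal.ofReal (4*M4) * ENNReal.ofReal (4*M7)) := by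
          rcases le_total (ENNReal.ofReal (4*M4)) (ENNReal.ofReal (4*M7)) with h | h
          · rw [min_eq_left h, mul_add]
            calc ENNReal.ofReal (4*M4) * ENNReal.ofReal (4*M4) +
                ENNReal.ofReal (4*M4) * ENNReal.ofReal (4*M7)
                ≤ ENNReal.ofReal (4*M4) * ENNReal.ofReal (4*M7) +
                  ENNReal.ofReal (4*M4) * ENNReal.ofReal (4*M7) :=
                  add_le_add_left (mul_le_mul_right h _) _
              _ = 2 * (ENNReal.ofReal (4*M4) * ENNReal.ofReal (4*M7)) := (two_mul _).symm
          · rw [min_eq_right h, mul_add]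
            calc ENNReal.ofReal (4*M7) * ENNReal.ofReal (4*M4) +
                ENNReal.ofReal (4*M7) * ENNReal.ofReal (4*M7)
                ≤ ENNReal.ofReal (4*M7) * ENNReal.ofReal (4*M4) +
                  ENNReal.ofReal (4*M7) * ENNReal.ofReal (4*M4) :=
                  add_le_add_right (mul_le_mul_right h _) _
              _ = 2 * (ENNReal.ofReal (4*M4) * ENNReal.ofReal (4*M7)) := by ring
  calc (∫⁻ ξ1, ∫⁻ ξ2, ∫⁻ ξ3, ∫⁻ ξ4, ∫⁻ ξ5, ∫⁻ ξ6, ∫⁻ ξ7,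
      (h1 ξ1 * h2 ξ2 * Psi M1 (ξ2 + ξ3) * h3 ξ3 * h4 ξ4 * h5 ξ5 * Psi M4 (ξ5 + ξ6) *
        Psi M7 (-(ξ1 + ξ2 + ξ3 + ξ4 + ξ5 + ξ6)) * h6 ξ6) *
        (h7 ξ7 * h8 (-(ξ1 + ξ2 + ξ3 + ξ4 + ξ5 + ξ6 + ξ7))))
      ≤ ∫⁻ ξ1, h1 ξ1 *
          (((∫⁻ x, h7 x ^ (2:ℝ)) ^ (1/2:ℝ) * (∫⁻ x, h8 x ^ (2:ℝ)) ^ (1/2:ℝ)) *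
            (min (ENNReal.ofReal (4*M4)) (ENNReal.ofReal (4*M7))) ^ (1/2:ℝ) *
            ((∫⁻ x, h5 x ^ (2:ℝ)) ^ (1/2:ℝ) * (∫⁻ x, h6 x ^ (2:ℝ)) ^ (1/2:ℝ)) *
            ((∫⁻ w, Efun M4 M7 w) ^ (1/2:ℝ)) * (ENNReal.ofReal (4*M1)) ^ (1/2:ℝ) *
            ((∫⁻ x, h2 x ^ (2:ℝ)) ^ (1/2:ℝ) * (∫⁻ x, h3 x ^ (2:ℝ)) ^ (1/2:ℝ)) *
            ((Kfun M1 M4 M7 h4 ξ1) ^ (1/2:ℝ))) :=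
        lintegral_mono fun ξ1 => T2 ξ1
    _ = (((∫⁻ x, h7 x ^ (2:ℝ)) ^ (1/2:ℝ) * (∫⁻ x, h8 x ^ (2:ℝ)) ^ (1/2:ℝ)) *
          (min (ENNReal.ofReal (4*M4)) (ENNReal.ofReal (4*M7))) ^ (1/2:ℝ) *
          ((∫⁻ x, h5 x ^ (2:ℝ)) ^ (1/2:ℝ) * (∫⁻ x, h6 x ^ (2:ℝ)) ^ (1/2:ℝ)) *
          ((∫⁻ w, Efun M4 M7 w) ^ (1/2:ℝ)) * (ENNReal.ofReal (4*M1)) ^ (1/2:ℝ) *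
          ((∫⁻ x, h2 x ^ (2:ℝ)) ^ (1/2:ℝ) * (∫⁻ x, h3 x ^ (2:ℝ)) ^ (1/2:ℝ))) *
        ∫⁻ ξ1, h1 ξ1 * (Kfun M1 M4 M7 h4 ξ1) ^ (1/2:ℝ) := by
        rw [← lintegral_const_mul' _ _ hCne]
        exact lintegral_congr fun ξ1 => by ring
    _ ≤ (((∫⁻ x, h7 x ^ (2:ℝ)) ^ (1/2:ℝ) * (∫⁻ x, h8 x ^ (2:ℝ)) ^ (1/2:ℝ)) *
          (min (ENNReal.ofReal (4*M4)) (ENNReal.ofReal (4*M7))) ^ (1/2:ℝ) *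
          ((∫⁻ x, h5 x ^ (2:ℝ)) ^ (1/2:ℝ) * (∫⁻ x, h6 x ^ (2:ℝ)) ^ (1/2:ℝ)) *
          ((∫⁻ w, Efun M4 M7 w) ^ (1/2:ℝ)) * (ENNReal.ofReal (4*M1)) ^ (1/2:ℝ) *
          ((∫⁻ x, h2 x ^ (2:ℝ)) ^ (1/2:ℝ) * (∫⁻ x, h3 x ^ (2:ℝ)) ^ (1/2:ℝ))) *
        ((∫⁻ x, h1 x ^ (2:ℝ)) ^ (1/2:ℝ) *
          (ENNReal.ofReal (4*M1) * ((∫⁻ x, h4 x ^ (2:ℝ)) * ∫⁻ w, Efun M4 M7 w)) ^ (1/2:ℝ)) :=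
        mul_le_mul_right (step1 M1 M4 M7 hM4 hM7 h1 h4 hm1 hm4 ht4 hq4) _
    _ = ((∫⁻ x, h1 x ^ (2:ℝ)) ^ (1/2:ℝ) * (∫⁻ x, h2 x ^ (2:ℝ)) ^ (1/2:ℝ) *
          (∫⁻ x, h3 x ^ (2:ℝ)) ^ (1/2:ℝ) * (∫⁻ x, h4 x ^ (2:ℝ)) ^ (1/2:ℝ) *
          (∫⁻ x, h5 x ^ (2:ℝ)) ^ (1/2:ℝ) * (∫⁻ x, h6 x ^ (2:ℝ)) ^ (1/2:ℝ) *
          (∫⁻ x, h7 x ^ (2:ℝ)) ^ (1/2:ℝ) * (∫⁻ x, h8 x ^ (2:ℝ)) ^ (1/2:ℝ)) *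
        (((ENNReal.ofReal (4*M1)) ^ (1/2:ℝ) * (ENNReal.ofReal (4*M1)) ^ (1/2:ℝ)) *
          ((min (ENNReal.ofReal (4*M4)) (ENNReal.ofReal (4*M7))) ^ (1/2:ℝ) *
            ((∫⁻ w, Efun M4 M7 w) ^ (1/2:ℝ) * (∫⁻ w, Efun M4 M7 w) ^ (1/2:ℝ)))) := by
        rw [sqrt_mul (ENNReal.ofReal (4*M1)), sqrt_mul (∫⁻ x, h4 x ^ (2:ℝ))]
        ring
    _ = ((∫⁻ x, h1 x ^ (2:ℝ)) ^ (1/2:ℝ) * (∫⁻ x, h2 x ^ (2:ℝ)) ^ (1/2:ℝ) *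
          (∫⁻ x, h3 x ^ (2:ℝ)) ^ (1/2:ℝ) * (∫⁻ x, h4 x ^ (2:ℝ)) ^ (1/2:ℝ) *
          (∫⁻ x, h5 x ^ (2:ℝ)) ^ (1/2:ℝ) * (∫⁻ x, h6 x ^ (2:ℝ)) ^ (1/2:ℝ) *
          (∫⁻ x, h7 x ^ (2:ℝ)) ^ (1/2:ℝ) * (∫⁻ x, h8 x ^ (2:ℝ)) ^ (1/2:ℝ)) *
        (ENNReal.ofReal (4*M1) *
          ((min (ENNReal.ofReal (4*M4)) (ENNReal.ofReal (4*M7))) ^ (1/2:ℝ) *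
            (∫⁻ w, Efun M4 M7 w))) := by
        rw [sqrt_mul_self, sqrt_mul_self]
    _ ≤ ((∫⁻ x, h1 x ^ (2:ℝ)) ^ (1/2:ℝ) * (∫⁻ x, h2 x ^ (2:ℝ)) ^ (1/2:ℝ) *
          (∫⁻ x, h3 x ^ (2:ℝ)) ^ (1/2:ℝ) * (∫⁻ x, h4 x ^ (2:ℝ)) ^ (1/2:ℝ) *
          (∫⁻ x, h5 x ^ (2:ℝ)) ^ (1/2:ℝ) * (∫⁻ x, h6 x ^ (2:ℝ)) ^ (1/2:ℝ) *
          (∫⁻ x, h7 x ^ (2:ℝ)) ^ (1/2:ℝ) * (∫⁻ x, h8 x ^ (2:ℝ)) ^ (1/2:ℝ)) *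
        (ENNReal.ofReal (4*M1) *
          (2 * (ENNReal.ofReal (4*M4) * ENNReal.ofReal (4*M7)))) :=
        mul_le_mul_right (mul_le_mul_right key _) _
    _ = _ := by ring

lemma enorm_facts {f : ℝ → ℂ} (hf : MemLp f 2 volume) :
    ∃ h : ℝ → ℝ≥0∞, Measurable h ∧ (∀ x, h x ≠ ∞) ∧
      (∀ᵐ x ∂(volume : Measure ℝ), ENNReal.ofReal ‖f x‖ = h x) ∧
      (∫⁻ x, h x ^ (2:ℝ)) ^ (1/2:ℝ) = eLpNorm f 2 volume := by
  refine ⟨fun x => ENNReal.ofReal ‖hf.1.mk f x‖, ?_, ?_, ?_, ?_⟩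
  · exact hf.1.stronglyMeasurable_mk.measurable.norm.ennreal_ofReal
  · intro x; exact ENNReal.ofReal_ne_top
  · filter_upwards [hf.1.ae_eq_mk] with x hx
    rw [hx]
  · have hcong : (∫⁻ x, (ENNReal.ofReal ‖hf.1.mk f x‖) ^ (2:ℝ)) =
        ∫⁻ x, ‖f x‖ₑ ^ (2:ℝ) := by
      refine lintegral_congr_ae ?_
      filter_upwards [hf.1.ae_eq_mk] with x hx
      rw [← hx, ofReal_norm_eq_enorm]
    rw [hcong, eLpNorm_eq_lintegral_rpow_enorm_toReal (by norm_num) (by norm_num)]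
    norm_num

lemma q_ne_top {h : ℝ → ℝ≥0∞} {s : ℝ≥0∞} (hn : (∫⁻ x, h x ^ (2:ℝ)) ^ (1/2:ℝ) = s)
    (hs : s ≠ ∞) : (∫⁻ x, h x ^ (2:ℝ)) ≠ ∞ := by
  intro hcon
  rw [hcon, ENNReal.top_rpow_of_pos (by norm_num)] at hn
  exact hs hn.symm

end EightLin

open EightLin

set_option maxHeartbeats 2000000 in
theorem eightlinear_convolution_estimate :
    ∃ C > 0, ∀ (M1 M4 M7 : ℝ), 0 < M1 → 0 < M4 → 0 < M7 →
      ∀ (φM1 φM4 φM7 : ℝ → ℝ),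
      (∀ ξ, 0 ≤ φM1 ξ ∧ φM1 ξ ≤ 1) →
      (∀ ξ, φM1 ξ ≠ 0 → M1 / 2 ≤ |ξ| ∧ |ξ| ≤ 2 * M1) →
      (∀ ξ, 0 ≤ φM4 ξ ∧ φM4 ξ ≤ 1) →
      (∀ ξ, φM4 ξ ≠ 0 → M4 / 2 ≤ |ξ| ∧ |ξ| ≤ 2 * M4) →
      (∀ ξ, 0 ≤ φM7 ξ ∧ φM7 ξ ≤ 1) →
      (∀ ξ, φM7 ξ ≠ 0 → M7 / 2 ≤ |ξ| ∧ |ξ| ≤ 2 * M7) →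
      ∀ (f1 f2 f3 f4 f5 f6 f7 f8 : ℝ → ℂ),
        MemLp f1 2 volume → MemLp f2 2 volume → MemLp f3 2 volume →
        MemLp f4 2 volume → MemLp f5 2 volume → MemLp f6 2 volume →
        MemLp f7 2 volume → MemLp f8 2 volume →
        (∫ ξ1 : ℝ, ∫ ξ2 : ℝ, ∫ ξ3 : ℝ, ∫ ξ4 : ℝ, ∫ ξ5 : ℝ, ∫ ξ6 : ℝ, ∫ ξ7 : ℝ,
            φM1 (ξ2 + ξ3) * φM4 (ξ5 + ξ6) *
              φM7 (ξ7 + (-(ξ1 + ξ2 + ξ3 + ξ4 + ξ5 + ξ6 + ξ7))) *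
              (‖f1 ξ1‖ * ‖f2 ξ2‖ * ‖f3 ξ3‖ * ‖f4 ξ4‖ * ‖f5 ξ5‖ * ‖f6 ξ6‖ *
                ‖f7 ξ7‖ * ‖f8 (-(ξ1 + ξ2 + ξ3 + ξ4 + ξ5 + ξ6 + ξ7))‖)) ≤
          C * (M1 * M4 * M7) *
            ((eLpNorm f1 2 volume).toReal * (eLpNorm f2 2 volume).toReal *
              (eLpNorm f3 2 volume).toReal * (eLpNorm f4 2 volume).toReal *
              (eLpNorm f5 2 volume).toReal * (eLpNorm f6 2 volume).toReal *
              (eLpNorm f7 2 volume).toReal * (eLpNorm f8 2 volume).toReal) := by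
  refine ⟨128, by norm_num, ?_⟩
  intro M1 M4 M7 hM1 hM4 hM7 φM1 φM4 φM7 hb1 hs1 hb4 hs4 hb7 hs7
    f1 f2 f3 f4 f5 f6 f7 f8 hf1 hf2 hf3 hf4 hf5 hf6 hf7 hf8
  obtain ⟨h1, hm1, ht1, hae1, hn1⟩ := enorm_facts hf1
  obtain ⟨h2, hm2, ht2, hae2, hn2⟩ := enorm_facts hf2
  obtain ⟨h3, hm3, ht3, hae3, hn3⟩ := enorm_facts hf3
  obtain ⟨h4, hm4, ht4, hae4, hn4⟩ := enorm_facts hf4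
  obtain ⟨h5, hm5, ht5, hae5, hn5⟩ := enorm_facts hf5
  obtain ⟨h6, hm6, ht6, hae6, hn6⟩ := enorm_facts hf6
  obtain ⟨h7, hm7, ht7, hae7, hn7⟩ := enorm_facts hf7
  obtain ⟨h8, hm8, ht8, hae8, hn8⟩ := enorm_facts hf8
  have hq2 := q_ne_top hn2 hf2.2.ne
  have hq3 := q_ne_top hn3 hf3.2.ne
  have hq4 := q_ne_top hn4 hf4.2.ne
  have hq5 := q_ne_top hn5 hf5.2.ne
  have hq6 := q_ne_top hn6 hf6.2.ne
  have hq7 := q_ne_top hn7 hf7.2.ne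
  have hq8 := q_ne_top hn8 hf8.2.ne
  set t1 := (eLpNorm f1 2 volume).toReal with ht1d
  set t2 := (eLpNorm f2 2 volume).toReal with ht2d
  set t3 := (eLpNorm f3 2 volume).toReal with ht3d
  set t4 := (eLpNorm f4 2 volume).toReal with ht4d
  set t5 := (eLpNorm f5 2 volume).toReal with ht5d
  set t6 := (eLpNorm f6 2 volume).toReal with ht6d
  set t7 := (eLpNorm f7 2 volume).toReal with ht7d
  set t8 := (eLpNorm f8 2 volume).toReal with ht8d
  have htnn : 0 ≤ t1 * t2 * t3 * t4 * t5 * t6 * t7 * t8 := by positivity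
  -- Step 1: reduce the Bochner integral to an iterated lower Lebesgue integral.
  have red : (∫⁻ ξ1, ENNReal.ofReal ‖∫ ξ2 : ℝ, ∫ ξ3 : ℝ, ∫ ξ4 : ℝ, ∫ ξ5 : ℝ, ∫ ξ6 : ℝ,
        ∫ ξ7 : ℝ, φM1 (ξ2 + ξ3) * φM4 (ξ5 + ξ6) *
          φM7 (ξ7 + (-(ξ1 + ξ2 + ξ3 + ξ4 + ξ5 + ξ6 + ξ7))) *
          (‖f1 ξ1‖ * ‖f2 ξ2‖ * ‖f3 ξ3‖ * ‖f4 ξ4‖ * ‖f5 ξ5‖ * ‖f6 ξ6‖ *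
            ‖f7 ξ7‖ * ‖f8 (-(ξ1 + ξ2 + ξ3 + ξ4 + ξ5 + ξ6 + ξ7))‖)‖) ≤
      (∫⁻ ξ1, ∫⁻ ξ2, ∫⁻ ξ3, ∫⁻ ξ4, ∫⁻ ξ5, ∫⁻ ξ6, ∫⁻ ξ7,
        ENNReal.ofReal ‖φM1 (ξ2 + ξ3) * φM4 (ξ5 + ξ6) *
          φM7 (ξ7 + (-(ξ1 + ξ2 + ξ3 + ξ4 + ξ5 + ξ6 + ξ7))) *
          (‖f1 ξ1‖ * ‖f2 ξ2‖ * ‖f3 ξ3‖ * ‖f4 ξ4‖ * ‖f5 ξ5‖ * ‖f6 ξ6‖ *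
            ‖f7 ξ7‖ * ‖f8 (-(ξ1 + ξ2 + ξ3 + ξ4 + ξ5 + ξ6 + ξ7))‖)‖) := by
    refine lintegral_mono fun ξ1 => ?_
    refine (ofReal_int_le _).trans (lintegral_mono fun ξ2 => ?_)
    refine (ofReal_int_le _).trans (lintegral_mono fun ξ3 => ?_)
    refine (ofReal_int_le _).trans (lintegral_mono fun ξ4 => ?_)
    refine (ofReal_int_le _).trans (lintegral_mono fun ξ5 => ?_)
    refine (ofReal_int_le _).trans (lintegral_mono fun ξ6 => ?_)
    exact ofReal_int_le _
  -- Step 2: pass to the measurable majorants.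
  have repl : (∫⁻ ξ1, ∫⁻ ξ2, ∫⁻ ξ3, ∫⁻ ξ4, ∫⁻ ξ5, ∫⁻ ξ6, ∫⁻ ξ7,
        ENNReal.ofReal ‖φM1 (ξ2 + ξ3) * φM4 (ξ5 + ξ6) *
          φM7 (ξ7 + (-(ξ1 + ξ2 + ξ3 + ξ4 + ξ5 + ξ6 + ξ7))) *
          (‖f1 ξ1‖ * ‖f2 ξ2‖ * ‖f3 ξ3‖ * ‖f4 ξ4‖ * ‖f5 ξ5‖ * ‖f6 ξ6‖ *
            ‖f7 ξ7‖ * ‖f8 (-(ξ1 + ξ2 + ξ3 + ξ4 + ξ5 + ξ6 + ξ7))‖)‖) ≤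
      (∫⁻ ξ1, ∫⁻ ξ2, ∫⁻ ξ3, ∫⁻ ξ4, ∫⁻ ξ5, ∫⁻ ξ6, ∫⁻ ξ7,
        (h1 ξ1 * h2 ξ2 * Psi M1 (ξ2 + ξ3) * h3 ξ3 * h4 ξ4 * h5 ξ5 * Psi M4 (ξ5 + ξ6) *
          Psi M7 (-(ξ1 + ξ2 + ξ3 + ξ4 + ξ5 + ξ6)) * h6 ξ6) *
          (h7 ξ7 * h8 (-(ξ1 + ξ2 + ξ3 + ξ4 + ξ5 + ξ6 + ξ7)))) := by
    refine lintegral_mono_ae ?_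
    filter_upwards [hae1] with ξ1 he1
    refine lintegral_mono_ae ?_
    filter_upwards [hae2] with ξ2 he2
    refine lintegral_mono_ae ?_
    filter_upwards [hae3] with ξ3 he3
    refine lintegral_mono_ae ?_
    filter_upwards [hae4] with ξ4 he4
    refine lintegral_mono_ae ?_
    filter_upwards [hae5] with ξ5 he5
    refine lintegral_mono_ae ?_
    filter_upwards [hae6] with ξ6 he6
    refine lintegral_mono_ae ?_
    have hae8' : ∀ᵐ ξ7 ∂(volume : Measure ℝ),
        ENNReal.ofReal ‖f8 (-(ξ1 + ξ2 + ξ3 + ξ4 + ξ5 + ξ6 + ξ7))‖ =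
          h8 (-(ξ1 + ξ2 + ξ3 + ξ4 + ξ5 + ξ6 + ξ7)) := by
      have hT : MeasurePreserving
          (fun x : ℝ => -((ξ1 + ξ2 + ξ3 + ξ4 + ξ5 + ξ6) + x)) volume volume :=
        (Measure.measurePreserving_neg volume).comp
          (measurePreserving_add_left volume (ξ1 + ξ2 + ξ3 + ξ4 + ξ5 + ξ6))
      have hcomp := hT.quasiMeasurePreserving.ae_eq_comp hae8
      filter_upwards [hcomp] with x hx
      rw [show -(ξ1 + ξ2 + ξ3 + ξ4 + ξ5 + ξ6 + x) =
        -((ξ1 + ξ2 + ξ3 + ξ4 + ξ5 + ξ6) + x) by ring]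
      exact hx
    filter_upwards [hae7, hae8'] with ξ7 he7 he8
    have hP : (0:ℝ) ≤ ‖f1 ξ1‖ * ‖f2 ξ2‖ * ‖f3 ξ3‖ * ‖f4 ξ4‖ * ‖f5 ξ5‖ * ‖f6 ξ6‖ *
        ‖f7 ξ7‖ * ‖f8 (-(ξ1 + ξ2 + ξ3 + ξ4 + ξ5 + ξ6 + ξ7))‖ := by positivity
    have hnn : (0:ℝ) ≤ φM1 (ξ2 + ξ3) * φM4 (ξ5 + ξ6) *
        φM7 (ξ7 + (-(ξ1 + ξ2 + ξ3 + ξ4 + ξ5 + ξ6 + ξ7))) *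
        (‖f1 ξ1‖ * ‖f2 ξ2‖ * ‖f3 ξ3‖ * ‖f4 ξ4‖ * ‖f5 ξ5‖ * ‖f6 ξ6‖ *
          ‖f7 ξ7‖ * ‖f8 (-(ξ1 + ξ2 + ξ3 + ξ4 + ξ5 + ξ6 + ξ7))‖) :=
      mul_nonneg (mul_nonneg (mul_nonneg (hb1 _).1 (hb4 _).1) (hb7 _).1) hP
    rw [Real.norm_eq_abs, abs_of_nonneg hnn]
    rw [ENNReal.ofReal_mul (mul_nonneg (mul_nonneg (hb1 _).1 (hb4 _).1) (hb7 _).1),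
      ENNReal.ofReal_mul (mul_nonneg (hb1 _).1 (hb4 _).1),
      ENNReal.ofReal_mul (hb1 _).1]
    rw [ENNReal.ofReal_mul (by positivity), ENNReal.ofReal_mul (by positivity),
      ENNReal.ofReal_mul (by positivity), ENNReal.ofReal_mul (by positivity),
      ENNReal.ofReal_mul (by positivity), ENNReal.ofReal_mul (by positivity),
      ENNReal.ofReal_mul (by positivity)]
    rw [show ξ7 + (-(ξ1 + ξ2 + ξ3 + ξ4 + ξ5 + ξ6 + ξ7)) =
      -(ξ1 + ξ2 + ξ3 + ξ4 + ξ5 + ξ6) by ring]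
    rw [he1, he2, he3, he4, he5, he6, he7, he8]
    calc ENNReal.ofReal (φM1 (ξ2 + ξ3)) * ENNReal.ofReal (φM4 (ξ5 + ξ6)) *
        ENNReal.ofReal (φM7 (-(ξ1 + ξ2 + ξ3 + ξ4 + ξ5 + ξ6))) *
        (h1 ξ1 * h2 ξ2 * h3 ξ3 * h4 ξ4 * h5 ξ5 * h6 ξ6 * h7 ξ7 *
          h8 (-(ξ1 + ξ2 + ξ3 + ξ4 + ξ5 + ξ6 + ξ7)))
        ≤ Psi M1 (ξ2 + ξ3) * Psi M4 (ξ5 + ξ6) * Psi M7 (-(ξ1 + ξ2 + ξ3 + ξ4 + ξ5 + ξ6)) *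
          (h1 ξ1 * h2 ξ2 * h3 ξ3 * h4 ξ4 * h5 ξ5 * h6 ξ6 * h7 ξ7 *
            h8 (-(ξ1 + ξ2 + ξ3 + ξ4 + ξ5 + ξ6 + ξ7))) :=
          mul_le_mul' (mul_le_mul' (mul_le_mul' (ofReal_le_Psi M1 φM1 hb1 hs1 _)
            (ofReal_le_Psi M4 φM4 hb4 hs4 _)) (ofReal_le_Psi M7 φM7 hb7 hs7 _)) le_rfl
      _ = _ := by ring
  -- Step 3: apply the core estimate.
  have core := aux_bound M1 M4 M7 hM1 hM4 hM7 h1 h2 h3 h4 h5 h6 h7 h8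
    hm1 hm2 hm3 hm4 hm5 hm6 hm7 hm8 ht1 ht2 ht3 ht4 ht5 ht6
    hq2 hq3 hq4 hq5 hq6 hq7 hq8
  -- Step 4: identify the right-hand side.
  have rhs_eq : 2 * ENNReal.ofReal (4*M1) * ENNReal.ofReal (4*M4) * ENNReal.ofReal (4*M7) *
      ((∫⁻ x, h1 x ^ (2:ℝ)) ^ (1/2:ℝ) * (∫⁻ x, h2 x ^ (2:ℝ)) ^ (1/2:ℝ) *
       (∫⁻ x, h3 x ^ (2:ℝ)) ^ (1/2:ℝ) * (∫⁻ x, h4 x ^ (2:ℝ)) ^ (1/2:ℝ) *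
       (∫⁻ x, h5 x ^ (2:ℝ)) ^ (1/2:ℝ) * (∫⁻ x, h6 x ^ (2:ℝ)) ^ (1/2:ℝ) *
       (∫⁻ x, h7 x ^ (2:ℝ)) ^ (1/2:ℝ) * (∫⁻ x, h8 x ^ (2:ℝ)) ^ (1/2:ℝ)) ≤
      ENNReal.ofReal (128 * (M1 * M4 * M7) * (t1 * t2 * t3 * t4 * t5 * t6 * t7 * t8)) := by
    have expand : ENNReal.ofReal (128 * (M1 * M4 * M7) *
        (t1 * t2 * t3 * t4 * t5 * t6 * t7 * t8)) =
        2 * ENNReal.ofReal (4*M1) * ENNReal.ofReal (4*M4) * ENNReal.ofReal (4*M7) *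
          (eLpNorm f1 2 volume * eLpNorm f2 2 volume * eLpNorm f3 2 volume *
           eLpNorm f4 2 volume * eLpNorm f5 2 volume * eLpNorm f6 2 volume *
           eLpNorm f7 2 volume * eLpNorm f8 2 volume) := by
      rw [show 128 * (M1 * M4 * M7) * (t1 * t2 * t3 * t4 * t5 * t6 * t7 * t8) =
        2 * ((4*M1) * ((4*M4) * ((4*M7) *
          (t1 * (t2 * (t3 * (t4 * (t5 * (t6 * (t7 * t8)))))))))) by ring]
      rw [ENNReal.ofReal_mul (p := 2) (by norm_num),
        ENNReal.ofReal_mul (p := 4*M1) (by positivity),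
        ENNReal.ofReal_mul (p := 4*M4) (by positivity),
        ENNReal.ofReal_mul (p := 4*M7) (by positivity),
        ENNReal.ofReal_mul (p := t1) (by positivity),
        ENNReal.ofReal_mul (p := t2) (by positivity),
        ENNReal.ofReal_mul (p := t3) (by positivity),
        ENNReal.ofReal_mul (p := t4) (by positivity),
        ENNReal.ofReal_mul (p := t5) (by positivity),
        ENNReal.ofReal_mul (p := t6) (by positivity),
        ENNReal.ofReal_mul (p := t7) (by positivity)]
      rw [ht1d, ht2d, ht3d, ht4d, ht5d, ht6d, ht7d, ht8d]
      rw [ENNReal.ofReal_toReal hf1.2.ne, ENNReal.ofReal_toReal hf2.2.ne,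
        ENNReal.ofReal_toReal hf3.2.ne, ENNReal.ofReal_toReal hf4.2.ne,
        ENNReal.ofReal_toReal hf5.2.ne, ENNReal.ofReal_toReal hf6.2.ne,
        ENNReal.ofReal_toReal hf7.2.ne, ENNReal.ofReal_toReal hf8.2.ne]
      simp only [ENNReal.ofReal_ofNat]
      ring
    rw [hn1, hn2, hn3, hn4, hn5, hn6, hn7, hn8, expand]
  -- Conclusion.
  calc (∫ ξ1 : ℝ, ∫ ξ2 : ℝ, ∫ ξ3 : ℝ, ∫ ξ4 : ℝ, ∫ ξ5 : ℝ, ∫ ξ6 : ℝ, ∫ ξ7 : ℝ,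
      φM1 (ξ2 + ξ3) * φM4 (ξ5 + ξ6) *
        φM7 (ξ7 + (-(ξ1 + ξ2 + ξ3 + ξ4 + ξ5 + ξ6 + ξ7))) *
        (‖f1 ξ1‖ * ‖f2 ξ2‖ * ‖f3 ξ3‖ * ‖f4 ξ4‖ * ‖f5 ξ5‖ * ‖f6 ξ6‖ *
          ‖f7 ξ7‖ * ‖f8 (-(ξ1 + ξ2 + ξ3 + ξ4 + ξ5 + ξ6 + ξ7))‖))
      ≤ (∫⁻ ξ1, ENNReal.ofReal ‖∫ ξ2 : ℝ, ∫ ξ3 : ℝ, ∫ ξ4 : ℝ, ∫ ξ5 : ℝ, ∫ ξ6 : ℝ,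
          ∫ ξ7 : ℝ, φM1 (ξ2 + ξ3) * φM4 (ξ5 + ξ6) *
            φM7 (ξ7 + (-(ξ1 + ξ2 + ξ3 + ξ4 + ξ5 + ξ6 + ξ7))) *
            (‖f1 ξ1‖ * ‖f2 ξ2‖ * ‖f3 ξ3‖ * ‖f4 ξ4‖ * ‖f5 ξ5‖ * ‖f6 ξ6‖ *
              ‖f7 ξ7‖ * ‖f8 (-(ξ1 + ξ2 + ξ3 + ξ4 + ξ5 + ξ6 + ξ7))‖)‖).toReal :=
        int_le_lint _
    _ ≤ 128 * (M1 * M4 * M7) * (t1 * t2 * t3 * t4 * t5 * t6 * t7 * t8) := by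
        refine ENNReal.toReal_le_of_le_ofReal (by positivity) ?_
        exact red.trans (repl.trans (core.trans rhs_eq))
end
end

section
/- Let f1,...,f8 ∈ L²(ℝ), and M1, M2, M4, M5 > 0 with adapted annular bump functions. Then ∫_{ξ1+⋯+ξ8=0} φ_{M1}(ξ2+ξ3) φ_{M2}(ξ1+ξ3) φ_{M4}(ξ5+ξ6) φ_{M5}(ξ4+ξ6) ∏_{j=1}^{8} |f_j(ξ_j)| ≤ C · M1 · M2^{1/2} · M4 · M5^{1/2} ∏_{j=1}^{8} ‖f_j‖_{L²}. -/
open MeasureTheory Set ENNReal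
namespace EightAux

lemma conj22 : Real.HolderConjugate 2 2 := Real.HolderConjugate.two_two

lemma cs (f g : ℝ → ℝ≥0∞) (hf : AEMeasurable f volume) (hg : AEMeasurable g volume) :
    ∫⁻ x, f x * g x ≤
      (∫⁻ x, f x ^ (2:ℝ)) ^ ((1:ℝ)/2) * (∫⁻ x, g x ^ (2:ℝ)) ^ ((1:ℝ)/2) := by
  have h := ENNReal.lintegral_mul_le_Lp_mul_Lq volume conj22 hf hg
  simpa [Pi.mul_apply] using h

lemma rpow_two' (x : ℝ≥0∞) : x ^ (2:ℝ) = x * x := by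
  rw [show (2:ℝ) = ((2:ℕ):ℝ) by norm_num, ENNReal.rpow_natCast, pow_two]

lemma half_sq (x : ℝ≥0∞) : (x ^ ((1:ℝ)/2)) ^ (2:ℝ) = x := by
  rw [← ENNReal.rpow_mul]; norm_num

lemma sq_half (x y : ℝ≥0∞) : (x * y) ^ ((1:ℝ)/2) = x ^ ((1:ℝ)/2) * y ^ ((1:ℝ)/2) :=
  ENNReal.mul_rpow_of_nonneg x y (by norm_num)

lemma half_half (x : ℝ≥0∞) : x ^ ((1:ℝ)/2) * x ^ ((1:ℝ)/2) = x := by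
  rw [← ENNReal.rpow_add_of_nonneg _ _ (by norm_num) (by norm_num)]
  norm_num

lemma lint_add_left (f : ℝ → ℝ≥0∞) (a : ℝ) : (∫⁻ x, f (a + x)) = ∫⁻ x, f x :=
  (measurePreserving_add_left volume a).lintegral_comp_emb
    (MeasurableEquiv.addLeft a).measurableEmbedding f

lemma lint_add_right (f : ℝ → ℝ≥0∞) (a : ℝ) : (∫⁻ x, f (x + a)) = ∫⁻ x, f x :=
  (measurePreserving_add_right volume a).lintegral_comp_emb
    (MeasurableEquiv.addRight a).measurableEmbedding f

lemma eLpNorm_two_eq (f : ℝ → ℂ) :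
    (∫⁻ x, (‖f x‖₊ : ℝ≥0∞) ^ (2:ℝ)) ^ ((1:ℝ)/2) = eLpNorm f 2 volume := by
  rw [eLpNorm_eq_lintegral_rpow_enorm_toReal (by norm_num) (by norm_num)]
  norm_num [enorm_eq_nnnorm]

lemma inner7 {f7 f8 : ℝ → ℂ} (h7 : AEStronglyMeasurable f7 volume)
    (h8 : AEStronglyMeasurable f8 volume) (S : ℝ) :
    (∫⁻ x, (‖f7 x‖₊ : ℝ≥0∞) * (‖f8 (-(S + x))‖₊ : ℝ≥0∞)) ≤
      eLpNorm f7 2 volume * eLpNorm f8 2 volume := by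
  have hm : MeasurePreserving (fun x : ℝ => -(S + x)) volume volume :=
    (Measure.measurePreserving_neg volume).comp (measurePreserving_add_left volume S)
  have hme : MeasurableEmbedding (fun x : ℝ => -(S + x)) :=
    ((MeasurableEquiv.addLeft S).trans (MeasurableEquiv.neg ℝ)).measurableEmbedding
  have hg : AEMeasurable (fun x => (‖f8 (-(S + x))‖₊ : ℝ≥0∞)) volume :=
    h8.enorm.comp_quasiMeasurePreserving hm.quasiMeasurePreserving
  have h := cs _ _ h7.enorm hg
  have e2 : (∫⁻ x, (‖f8 (-(S + x))‖₊ : ℝ≥0∞) ^ (2:ℝ)) = ∫⁻ x, (‖f8 x‖₊ : ℝ≥0∞) ^ (2:ℝ) :=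
    hm.lintegral_comp_emb hme (fun y => (‖f8 y‖₊ : ℝ≥0∞) ^ (2:ℝ))
  rw [e2] at h
  calc (∫⁻ x, (‖f7 x‖₊ : ℝ≥0∞) * (‖f8 (-(S + x))‖₊ : ℝ≥0∞)) ≤ _ := h
    _ = eLpNorm f7 2 volume * eLpNorm f8 2 volume := by simp only [enorm_eq_nnnorm]; rw [eLpNorm_two_eq, eLpNorm_two_eq]

lemma tri_meas (S T : Set ℝ) (hS : MeasurableSet S) (hT : MeasurableSet T)
    (hSf : volume S ≠ ⊤) (hTf : volume T ≠ ⊤)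
    (g h p : ℝ → ℝ≥0∞) (hg : Measurable g) (hh : Measurable h) (hp : Measurable p) :
    (∫⁻ x, ∫⁻ y, ∫⁻ z,
        S.indicator 1 (y + z) * T.indicator 1 (x + z) * (g x * (h y * p z))) ≤
      volume S * volume T ^ ((1:ℝ)/2) *
        ((∫⁻ t, g t ^ (2:ℝ)) ^ ((1:ℝ)/2) * ((∫⁻ t, h t ^ (2:ℝ)) ^ ((1:ℝ)/2) *
          (∫⁻ t, p t ^ (2:ℝ)) ^ ((1:ℝ)/2))) := by
  set A : ℝ → ℝ≥0∞ := S.indicator 1 with hAdef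
  set B : ℝ → ℝ≥0∞ := T.indicator 1 with hBdef
  have hA : Measurable A := measurable_one.indicator hS
  have hB : Measurable B := measurable_one.indicator hT
  have hAsq : ∀ u, A u * A u = A u := by
    intro u; by_cases hu : u ∈ S <;> simp [hAdef, hu]
  have hBsq : ∀ u, B u * B u = B u := by
    intro u; by_cases hu : u ∈ T <;> simp [hBdef, hu]
  have hA2 : ∀ u, A u ^ (2:ℝ) = A u := by
    intro u; rw [rpow_two', hAsq]
  set Ng : ℝ≥0∞ := (∫⁻ t, g t ^ (2:ℝ)) ^ ((1:ℝ)/2) with hNg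
  set Nh : ℝ≥0∞ := (∫⁻ t, h t ^ (2:ℝ)) ^ ((1:ℝ)/2) with hNh
  set Np : ℝ≥0∞ := (∫⁻ t, p t ^ (2:ℝ)) ^ ((1:ℝ)/2) with hNp
  set J : ℝ → ℝ → ℝ≥0∞ := fun x y => ∫⁻ z, A (y + z) * (B (x + z) * p z) with hJdef
  set K : ℝ → ℝ → ℝ≥0∞ :=
    fun x y => (∫⁻ z, A (y + z) * (B (x + z) * p z ^ (2:ℝ))) ^ ((1:ℝ)/2) with hKdef
  set Q : ℝ → ℝ≥0∞ := fun x => ∫⁻ z, B (x + z) * p z ^ (2:ℝ) with hQdef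
  have hQm : Measurable Q := by
    apply Measurable.lintegral_prod_right'
      (f := fun q : ℝ × ℝ => B (q.1 + q.2) * p q.2 ^ (2:ℝ))
    exact (hB.comp (measurable_fst.add measurable_snd)).mul
      ((hp.comp measurable_snd).pow measurable_const)
  have hJm : ∀ x, Measurable fun y => J x y := by
    intro x
    apply Measurable.lintegral_prod_right'
      (f := fun q : ℝ × ℝ => A (q.1 + q.2) * (B (x + q.2) * p q.2))
    exact (hA.comp (measurable_fst.add measurable_snd)).mul
      ((hB.comp (measurable_const.add measurable_snd)).mul (hp.comp measurable_snd))
  have hKm : ∀ x, Measurable fun y => K x y := by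
    intro x
    apply Measurable.pow _ measurable_const
    apply Measurable.lintegral_prod_right'
      (f := fun q : ℝ × ℝ => A (q.1 + q.2) * (B (x + q.2) * p q.2 ^ (2:ℝ)))
    exact (hA.comp (measurable_fst.add measurable_snd)).mul
      ((hB.comp (measurable_const.add measurable_snd)).mul
        ((hp.comp measurable_snd).pow measurable_const))
  have step_z : ∀ x y, (∫⁻ z, A (y + z) * B (x + z) * (g x * (h y * p z)))
      = (g x * h y) * J x y := by
    intro x y
    calc (∫⁻ z, A (y + z) * B (x + z) * (g x * (h y * p z)))
        = ∫⁻ z, (g x * h y) * (A (y + z) * (B (x + z) * p z)) :=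
          lintegral_congr fun z => by ring
      _ = (g x * h y) * J x y := by
          rw [hJdef]
          exact lintegral_const_mul _ ((hA.comp (measurable_const.add measurable_id)).mul
            ((hB.comp (measurable_const.add measurable_id)).mul hp))
  have hJ_le : ∀ x y, J x y ≤ volume S ^ ((1:ℝ)/2) * K x y := by
    intro x y
    have h1 : J x y = ∫⁻ z, (A (y + z)) * (A (y + z) * (B (x + z) * p z)) := by
      rw [hJdef]
      refine lintegral_congr fun z => ?_
      conv_lhs => rw [← hAsq (y + z), mul_assoc]
    rw [h1]
    have h2 := cs (fun z => A (y + z)) (fun z => A (y + z) * (B (x + z) * p z))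
      (hA.comp (measurable_const.add measurable_id)).aemeasurable
      ((hA.comp (measurable_const.add measurable_id)).mul
        ((hB.comp (measurable_const.add measurable_id)).mul hp)).aemeasurable
    refine h2.trans (le_of_eq ?_)
    have e1 : (∫⁻ z, A (y + z) ^ (2:ℝ)) = volume S := by
      calc (∫⁻ z, A (y + z) ^ (2:ℝ)) = ∫⁻ z, A (y + z) := lintegral_congr fun z => hA2 _
        _ = ∫⁻ z, A z := lint_add_left A y
        _ = volume S := lintegral_indicator_one hS
    have e2 : (∫⁻ z, (A (y + z) * (B (x + z) * p z)) ^ (2:ℝ))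
        = ∫⁻ z, A (y + z) * (B (x + z) * p z ^ (2:ℝ)) := by
      refine lintegral_congr fun z => ?_
      calc (A (y + z) * (B (x + z) * p z)) ^ (2:ℝ)
          = (A (y + z) * A (y + z)) * ((B (x + z) * B (x + z)) * (p z * p z)) := by
            rw [rpow_two']; ring
        _ = A (y + z) * (B (x + z) * p z ^ (2:ℝ)) := by
            rw [hAsq, hBsq, ← rpow_two']
    rw [e1, e2, hKdef]
  have hKsq : ∀ x, (∫⁻ y, (K x y) ^ (2:ℝ)) = volume S * Q x := by
    intro x
    have h1 : (∫⁻ y, (K x y) ^ (2:ℝ))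
        = ∫⁻ y, ∫⁻ z, A (y + z) * (B (x + z) * p z ^ (2:ℝ)) :=
      lintegral_congr fun y => half_sq _
    rw [h1]
    rw [lintegral_lintegral_swap (((hA.comp (measurable_fst.add measurable_snd)).mul
      ((hB.comp (measurable_const.add measurable_snd)).mul
        ((hp.comp measurable_snd).pow measurable_const))).aemeasurable)]
    have h2 : ∀ z, (∫⁻ y, A (y + z) * (B (x + z) * p z ^ (2:ℝ)))
        = volume S * (B (x + z) * p z ^ (2:ℝ)) := by
      intro z
      rw [show (∫⁻ y, A (y + z) * (B (x + z) * p z ^ (2:ℝ)))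
          = (∫⁻ y, A (y + z)) * (B (x + z) * p z ^ (2:ℝ)) from
            lintegral_mul_const _ (hA.comp (measurable_id.add_const z)),
        lint_add_right A z, lintegral_indicator_one hS]
    calc (∫⁻ z, ∫⁻ y, A (y + z) * (B (x + z) * p z ^ (2:ℝ)))
        = ∫⁻ z, volume S * (B (x + z) * p z ^ (2:ℝ)) := lintegral_congr h2
      _ = volume S * Q x := lintegral_const_mul' _ _ hSf
  have hy_le : ∀ x, (∫⁻ y, (g x * h y) * J x y)
      ≤ g x * (volume S * (Nh * (Q x) ^ ((1:ℝ)/2))) := by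
    intro x
    calc (∫⁻ y, (g x * h y) * J x y)
        = ∫⁻ y, g x * (h y * J x y) := lintegral_congr fun y => by ring
      _ = g x * ∫⁻ y, h y * J x y := lintegral_const_mul _ (hh.mul (hJm x))
      _ ≤ g x * ∫⁻ y, h y * (volume S ^ ((1:ℝ)/2) * K x y) :=
          mul_le_mul_right (lintegral_mono fun y => mul_le_mul_right (hJ_le x y) _) _
      _ = g x * (volume S ^ ((1:ℝ)/2) * ∫⁻ y, h y * K x y) := by
          congr 1
          calc (∫⁻ y, h y * (volume S ^ ((1:ℝ)/2) * K x y))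
              = ∫⁻ y, volume S ^ ((1:ℝ)/2) * (h y * K x y) :=
                lintegral_congr fun y => by ring
            _ = volume S ^ ((1:ℝ)/2) * ∫⁻ y, h y * K x y :=
                lintegral_const_mul _ (hh.mul (hKm x))
      _ ≤ g x * (volume S ^ ((1:ℝ)/2) * (Nh * (∫⁻ y, (K x y) ^ (2:ℝ)) ^ ((1:ℝ)/2))) := by
          refine mul_le_mul_right (mul_le_mul_right ?_ _) _
          exact cs _ _ hh.aemeasurable (hKm x).aemeasurable
      _ = g x * (volume S * (Nh * (Q x) ^ ((1:ℝ)/2))) := by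
          rw [hKsq x, sq_half]
          congr 1
          calc volume S ^ ((1:ℝ)/2) * (Nh * (volume S ^ ((1:ℝ)/2) * Q x ^ ((1:ℝ)/2)))
              = (volume S ^ ((1:ℝ)/2) * volume S ^ ((1:ℝ)/2)) * (Nh * Q x ^ ((1:ℝ)/2)) := by
                ring
            _ = volume S * (Nh * Q x ^ ((1:ℝ)/2)) := by rw [half_half]
  calc (∫⁻ x, ∫⁻ y, ∫⁻ z, A (y + z) * B (x + z) * (g x * (h y * p z)))
      = ∫⁻ x, ∫⁻ y, (g x * h y) * J x y :=
        lintegral_congr fun x => lintegral_congr fun y => step_z x y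
    _ ≤ ∫⁻ x, g x * (volume S * (Nh * (Q x) ^ ((1:ℝ)/2))) := lintegral_mono fun x => hy_le x
    _ = ∫⁻ x, (volume S * Nh) * (g x * (Q x) ^ ((1:ℝ)/2)) := lintegral_congr fun x => by ring
    _ = (volume S * Nh) * ∫⁻ x, g x * (Q x) ^ ((1:ℝ)/2) :=
        lintegral_const_mul _ (hg.mul (hQm.pow measurable_const))
    _ ≤ (volume S * Nh) * (Ng * (∫⁻ x, ((Q x) ^ ((1:ℝ)/2)) ^ (2:ℝ)) ^ ((1:ℝ)/2)) :=
        mul_le_mul_right (cs _ _ hg.aemeasurable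
          (hQm.pow measurable_const).aemeasurable) _
    _ = (volume S * Nh) * (Ng * (volume T ^ ((1:ℝ)/2) * Np)) := by
        have h1 : (∫⁻ x, ((Q x) ^ ((1:ℝ)/2)) ^ (2:ℝ)) = ∫⁻ x, Q x :=
          lintegral_congr fun x => half_sq _
        have h2 : (∫⁻ x, Q x) = volume T * ∫⁻ t, p t ^ (2:ℝ) := by
          rw [hQdef]
          rw [lintegral_lintegral_swap (((hB.comp (measurable_fst.add measurable_snd)).mul
            ((hp.comp measurable_snd).pow measurable_const)).aemeasurable)]
          calc (∫⁻ z, ∫⁻ x, B (x + z) * p z ^ (2:ℝ))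
              = ∫⁻ z, volume T * p z ^ (2:ℝ) := by
                refine lintegral_congr fun z => ?_
                rw [show (∫⁻ x', B (x' + z) * p z ^ (2:ℝ))
                    = (∫⁻ x', B (x' + z)) * p z ^ (2:ℝ) from
                      lintegral_mul_const _ (hB.comp (measurable_id.add_const z)),
                  lint_add_right B z, lintegral_indicator_one hT]
            _ = volume T * ∫⁻ t, p t ^ (2:ℝ) := lintegral_const_mul' _ _ hTf
        rw [h1, h2, sq_half, hNp]
    _ = volume S * volume T ^ ((1:ℝ)/2) * (Ng * (Nh * Np)) := by ring

lemma tri (S T : Set ℝ) (hS : MeasurableSet S) (hT : MeasurableSet T)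
    (hSf : volume S ≠ ⊤) (hTf : volume T ≠ ⊤)
    (g h p : ℝ → ℝ≥0∞) (hg : AEMeasurable g volume) (hh : AEMeasurable h volume)
    (hp : AEMeasurable p volume) :
    (∫⁻ x, ∫⁻ y, ∫⁻ z,
        S.indicator 1 (y + z) * T.indicator 1 (x + z) * (g x * (h y * p z))) ≤
      volume S * volume T ^ ((1:ℝ)/2) *
        ((∫⁻ t, g t ^ (2:ℝ)) ^ ((1:ℝ)/2) * ((∫⁻ t, h t ^ (2:ℝ)) ^ ((1:ℝ)/2) *
          (∫⁻ t, p t ^ (2:ℝ)) ^ ((1:ℝ)/2))) := by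
  have e1 : (∫⁻ x, ∫⁻ y, ∫⁻ z,
      S.indicator 1 (y + z) * T.indicator 1 (x + z) * (g x * (h y * p z)))
      = ∫⁻ x, ∫⁻ y, ∫⁻ z,
        S.indicator 1 (y + z) * T.indicator 1 (x + z) * (hg.mk g x * (hh.mk h y * hp.mk p z)) := by
    refine lintegral_congr_ae ?_
    filter_upwards [hg.ae_eq_mk] with x hx
    refine lintegral_congr_ae ?_
    filter_upwards [hh.ae_eq_mk] with y hy
    refine lintegral_congr_ae ?_
    filter_upwards [hp.ae_eq_mk] with z hz
    rw [hx, hy, hz]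
  have e2 : (∫⁻ t, g t ^ (2:ℝ)) = ∫⁻ t, hg.mk g t ^ (2:ℝ) :=
    lintegral_congr_ae (hg.ae_eq_mk.mono fun t ht => by simp only [ht])
  have e3 : (∫⁻ t, h t ^ (2:ℝ)) = ∫⁻ t, hh.mk h t ^ (2:ℝ) :=
    lintegral_congr_ae (hh.ae_eq_mk.mono fun t ht => by simp only [ht])
  have e4 : (∫⁻ t, p t ^ (2:ℝ)) = ∫⁻ t, hp.mk p t ^ (2:ℝ) :=
    lintegral_congr_ae (hp.ae_eq_mk.mono fun t ht => by simp only [ht])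
  rw [e1, e2, e3, e4]
  exact tri_meas S T hS hT hSf hTf _ _ _ hg.measurable_mk hh.measurable_mk hp.measurable_mk

lemma indicator_one_ne_top (S : Set ℝ) (u : ℝ) : S.indicator (1 : ℝ → ℝ≥0∞) u ≠ ⊤ := by
  by_cases hu : u ∈ S <;> simp [hu]

lemma ofReal_integral_le (f : ℝ → ℝ) (hf : ∀ x, 0 ≤ f x) :
    ENNReal.ofReal (∫ x, f x) ≤ ∫⁻ x, ENNReal.ofReal (f x) := by
  by_cases hi : Integrable f volume
  · rw [integral_eq_lintegral_of_nonneg_ae (Filter.Eventually.of_forall hf) hi.1,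
      ENNReal.ofReal_toReal]
    exact ((hasFiniteIntegral_iff_ofReal (Filter.Eventually.of_forall hf)).mp hi.2).ne
  · rw [integral_undef hi]; simp

lemma bridge7 (F : ℝ → ℝ → ℝ → ℝ → ℝ → ℝ → ℝ → ℝ)
    (hF : ∀ a b c d e f g, 0 ≤ F a b c d e f g) :
    ENNReal.ofReal (∫ a, ∫ b, ∫ c, ∫ d, ∫ e, ∫ f, ∫ g, F a b c d e f g) ≤
      ∫⁻ a, ∫⁻ b, ∫⁻ c, ∫⁻ d, ∫⁻ e, ∫⁻ f, ∫⁻ g, ENNReal.ofReal (F a b c d e f g) := by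
  have n6 : ∀ a b c d e f, 0 ≤ ∫ g, F a b c d e f g :=
    fun a b c d e f => integral_nonneg (hF a b c d e f)
  have n5 : ∀ a b c d e, 0 ≤ ∫ f, ∫ g, F a b c d e f g :=
    fun a b c d e => integral_nonneg fun f => n6 a b c d e f
  have n4 : ∀ a b c d, 0 ≤ ∫ e, ∫ f, ∫ g, F a b c d e f g :=
    fun a b c d => integral_nonneg fun e => n5 a b c d e
  have n3 : ∀ a b c, 0 ≤ ∫ d, ∫ e, ∫ f, ∫ g, F a b c d e f g :=
    fun a b c => integral_nonneg fun d => n4 a b c d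
  have n2 : ∀ a b, 0 ≤ ∫ c, ∫ d, ∫ e, ∫ f, ∫ g, F a b c d e f g :=
    fun a b => integral_nonneg fun c => n3 a b c
  have n1 : ∀ a, 0 ≤ ∫ b, ∫ c, ∫ d, ∫ e, ∫ f, ∫ g, F a b c d e f g :=
    fun a => integral_nonneg fun b => n2 a b
  calc ENNReal.ofReal (∫ a, ∫ b, ∫ c, ∫ d, ∫ e, ∫ f, ∫ g, F a b c d e f g)
      ≤ ∫⁻ a, ENNReal.ofReal (∫ b, ∫ c, ∫ d, ∫ e, ∫ f, ∫ g, F a b c d e f g) :=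
        ofReal_integral_le _ n1
    _ ≤ ∫⁻ a, ∫⁻ b, ENNReal.ofReal (∫ c, ∫ d, ∫ e, ∫ f, ∫ g, F a b c d e f g) :=
        lintegral_mono fun a => ofReal_integral_le _ (n2 a)
    _ ≤ ∫⁻ a, ∫⁻ b, ∫⁻ c, ENNReal.ofReal (∫ d, ∫ e, ∫ f, ∫ g, F a b c d e f g) :=
        lintegral_mono fun a => lintegral_mono fun b => ofReal_integral_le _ (n3 a b)
    _ ≤ ∫⁻ a, ∫⁻ b, ∫⁻ c, ∫⁻ d, ENNReal.ofReal (∫ e, ∫ f, ∫ g, F a b c d e f g) :=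
        lintegral_mono fun a => lintegral_mono fun b => lintegral_mono fun c =>
          ofReal_integral_le _ (n4 a b c)
    _ ≤ ∫⁻ a, ∫⁻ b, ∫⁻ c, ∫⁻ d, ∫⁻ e, ENNReal.ofReal (∫ f, ∫ g, F a b c d e f g) :=
        lintegral_mono fun a => lintegral_mono fun b => lintegral_mono fun c =>
          lintegral_mono fun d => ofReal_integral_le _ (n5 a b c d)
    _ ≤ ∫⁻ a, ∫⁻ b, ∫⁻ c, ∫⁻ d, ∫⁻ e, ∫⁻ f, ENNReal.ofReal (∫ g, F a b c d e f g) :=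
        lintegral_mono fun a => lintegral_mono fun b => lintegral_mono fun c =>
          lintegral_mono fun d => lintegral_mono fun e => ofReal_integral_le _ (n6 a b c d e)
    _ ≤ ∫⁻ a, ∫⁻ b, ∫⁻ c, ∫⁻ d, ∫⁻ e, ∫⁻ f, ∫⁻ g, ENNReal.ofReal (F a b c d e f g) :=
        lintegral_mono fun a => lintegral_mono fun b => lintegral_mono fun c =>
          lintegral_mono fun d => lintegral_mono fun e => lintegral_mono fun f =>
            ofReal_integral_le _ (hF a b c d e f)

lemma pull (r c : ℝ≥0∞) (hr : r ≠ ⊤) (hc : c ≠ ⊤) (f : ℝ → ℝ≥0∞) :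
    (∫⁻ t, r * (f t * c)) = r * ((∫⁻ t, f t) * c) := by
  rw [lintegral_const_mul' r _ hr, lintegral_mul_const' c f hc]

lemma h4half (M : ℝ) (hM : 0 ≤ M) : (4 * M) ^ ((1:ℝ)/2) = 2 * M ^ ((1:ℝ)/2) := by
  rw [Real.mul_rpow (by norm_num) hM]
  congr 1
  rw [show (4:ℝ) = (2:ℝ) ^ (2:ℕ) by norm_num, ← Real.rpow_natCast 2 2,
    ← Real.rpow_mul (by norm_num)]
  norm_num

end EightAux

open EightAux

theorem eightlinear_refined_convolution_estimate :
    ∃ C > 0, ∀ (M1 M2 M4 M5 : ℝ), 0 < M1 → 0 < M2 → 0 < M4 → 0 < M5 →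
      ∀ (φM1 φM2 φM4 φM5 : ℝ → ℝ),
      (∀ ξ, 0 ≤ φM1 ξ ∧ φM1 ξ ≤ 1) →
      (∀ ξ, φM1 ξ ≠ 0 → M1 / 2 ≤ |ξ| ∧ |ξ| ≤ 2 * M1) →
      (∀ ξ, 0 ≤ φM2 ξ ∧ φM2 ξ ≤ 1) →
      (∀ ξ, φM2 ξ ≠ 0 → M2 / 2 ≤ |ξ| ∧ |ξ| ≤ 2 * M2) →
      (∀ ξ, 0 ≤ φM4 ξ ∧ φM4 ξ ≤ 1) →
      (∀ ξ, φM4 ξ ≠ 0 → M4 / 2 ≤ |ξ| ∧ |ξ| ≤ 2 * M4) →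
      (∀ ξ, 0 ≤ φM5 ξ ∧ φM5 ξ ≤ 1) →
      (∀ ξ, φM5 ξ ≠ 0 → M5 / 2 ≤ |ξ| ∧ |ξ| ≤ 2 * M5) →
      ∀ (f1 f2 f3 f4 f5 f6 f7 f8 : ℝ → ℂ),
        MemLp f1 2 volume → MemLp f2 2 volume → MemLp f3 2 volume →
        MemLp f4 2 volume → MemLp f5 2 volume → MemLp f6 2 volume →
        MemLp f7 2 volume → MemLp f8 2 volume →
        (∫ ξ1 : ℝ, ∫ ξ2 : ℝ, ∫ ξ3 : ℝ, ∫ ξ4 : ℝ, ∫ ξ5 : ℝ, ∫ ξ6 : ℝ, ∫ ξ7 : ℝ,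
            φM1 (ξ2 + ξ3) * φM2 (ξ1 + ξ3) * φM4 (ξ5 + ξ6) * φM5 (ξ4 + ξ6) *
              (‖f1 ξ1‖ * ‖f2 ξ2‖ * ‖f3 ξ3‖ * ‖f4 ξ4‖ * ‖f5 ξ5‖ * ‖f6 ξ6‖ *
                ‖f7 ξ7‖ * ‖f8 (-(ξ1 + ξ2 + ξ3 + ξ4 + ξ5 + ξ6 + ξ7))‖)) ≤
          C * (M1 * M2 ^ ((1 : ℝ) / 2) * M4 * M5 ^ ((1 : ℝ) / 2)) *
            ((eLpNorm f1 2 volume).toReal * (eLpNorm f2 2 volume).toReal *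
              (eLpNorm f3 2 volume).toReal * (eLpNorm f4 2 volume).toReal *
              (eLpNorm f5 2 volume).toReal * (eLpNorm f6 2 volume).toReal *
              (eLpNorm f7 2 volume).toReal * (eLpNorm f8 2 volume).toReal) := by
  refine ⟨64, by norm_num, ?_⟩
  intro M1 M2 M4 M5 hM1 hM2 hM4 hM5 φM1 φM2 φM4 φM5 hb1 hs1 hb2 hs2 hb4 hs4 hb5 hs5
    f1 f2 f3 f4 f5 f6 f7 f8 h1 h2 h3 h4 h5 h6 h7 h8
  set T1 : Set ℝ := abs ⁻¹' (Icc (M1/2) (2*M1)) with hT1def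
  set T2 : Set ℝ := abs ⁻¹' (Icc (M2/2) (2*M2)) with hT2def
  set T4 : Set ℝ := abs ⁻¹' (Icc (M4/2) (2*M4)) with hT4def
  set T5 : Set ℝ := abs ⁻¹' (Icc (M5/2) (2*M5)) with hT5def
  have hT1m : MeasurableSet T1 := measurable_abs measurableSet_Icc
  have hT2m : MeasurableSet T2 := measurable_abs measurableSet_Icc
  have hT4m : MeasurableSet T4 := measurable_abs measurableSet_Icc
  have hT5m : MeasurableSet T5 := measurable_abs measurableSet_Icc
  have hvol : ∀ M : ℝ, volume (abs ⁻¹' (Icc (M/2) (2*M))) ≤ ENNReal.ofReal (4*M) := by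
    intro M
    have hsub : abs ⁻¹' (Icc (M/2) (2*M)) ⊆ Icc (-(2*M)) (2*M) := by
      intro x hx
      exact abs_le.mp (Set.mem_Icc.mp (Set.mem_preimage.mp hx)).2
    calc volume (abs ⁻¹' (Icc (M/2) (2*M))) ≤ volume (Icc (-(2*M)) (2*M)) :=
          measure_mono hsub
      _ = ENNReal.ofReal (2*M - -(2*M)) := Real.volume_Icc
      _ = ENNReal.ofReal (4*M) := by rw [show 2*M - -(2*M) = 4*M by ring]
  have hT1f : volume T1 ≠ ⊤ := ((hvol M1).trans_lt ENNReal.ofReal_lt_top).ne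
  have hT2f : volume T2 ≠ ⊤ := ((hvol M2).trans_lt ENNReal.ofReal_lt_top).ne
  have hT4f : volume T4 ≠ ⊤ := ((hvol M4).trans_lt ENNReal.ofReal_lt_top).ne
  have hT5f : volume T5 ≠ ⊤ := ((hvol M5).trans_lt ENNReal.ofReal_lt_top).ne
  set N1 : ℝ≥0∞ := eLpNorm f1 2 volume with hN1def
  set N2 : ℝ≥0∞ := eLpNorm f2 2 volume with hN2def
  set N3 : ℝ≥0∞ := eLpNorm f3 2 volume with hN3def
  set N4 : ℝ≥0∞ := eLpNorm f4 2 volume with hN4def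
  set N5 : ℝ≥0∞ := eLpNorm f5 2 volume with hN5def
  set N6 : ℝ≥0∞ := eLpNorm f6 2 volume with hN6def
  set N7 : ℝ≥0∞ := eLpNorm f7 2 volume with hN7def
  set N8 : ℝ≥0∞ := eLpNorm f8 2 volume with hN8def
  have hN1ne : N1 ≠ ⊤ := h1.eLpNorm_ne_top
  have hN2ne : N2 ≠ ⊤ := h2.eLpNorm_ne_top
  have hN3ne : N3 ≠ ⊤ := h3.eLpNorm_ne_top
  have hN4ne : N4 ≠ ⊤ := h4.eLpNorm_ne_top
  have hN5ne : N5 ≠ ⊤ := h5.eLpNorm_ne_top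
  have hN6ne : N6 ≠ ⊤ := h6.eLpNorm_ne_top
  have hN7ne : N7 ≠ ⊤ := h7.eLpNorm_ne_top
  have hN8ne : N8 ≠ ⊤ := h8.eLpNorm_ne_top
  have hind : ∀ (M : ℝ) (φ : ℝ → ℝ), (∀ ξ, 0 ≤ φ ξ ∧ φ ξ ≤ 1) →
      (∀ ξ, φ ξ ≠ 0 → M / 2 ≤ |ξ| ∧ |ξ| ≤ 2 * M) → ∀ u,
      ENNReal.ofReal (φ u) ≤ (abs ⁻¹' (Icc (M/2) (2*M))).indicator 1 u := by
    intro M φ hb hs u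
    by_cases hu : u ∈ abs ⁻¹' (Icc (M/2) (2*M))
    · rw [Set.indicator_of_mem hu]
      simpa using ENNReal.ofReal_le_one.mpr (hb u).2
    · have h0 : φ u = 0 := by
        by_contra hne
        exact hu (Set.mem_preimage.mpr (Set.mem_Icc.mpr (hs u hne)))
      simp [h0]
  have hPnn : ∀ ξ1 ξ2 ξ3 ξ4 ξ5 ξ6 ξ7 : ℝ,
      0 ≤ φM1 (ξ2 + ξ3) * φM2 (ξ1 + ξ3) * φM4 (ξ5 + ξ6) * φM5 (ξ4 + ξ6) *
        (‖f1 ξ1‖ * ‖f2 ξ2‖ * ‖f3 ξ3‖ * ‖f4 ξ4‖ * ‖f5 ξ5‖ * ‖f6 ξ6‖ *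
          ‖f7 ξ7‖ * ‖f8 (-(ξ1 + ξ2 + ξ3 + ξ4 + ξ5 + ξ6 + ξ7))‖) := by
    intro ξ1 ξ2 ξ3 ξ4 ξ5 ξ6 ξ7
    exact mul_nonneg (mul_nonneg (mul_nonneg (mul_nonneg (hb1 _).1 (hb2 _).1)
      (hb4 _).1) (hb5 _).1) (by positivity)
  have hpt : ∀ ξ1 ξ2 ξ3 ξ4 ξ5 ξ6 ξ7 : ℝ,
      ENNReal.ofReal (φM1 (ξ2 + ξ3) * φM2 (ξ1 + ξ3) * φM4 (ξ5 + ξ6) * φM5 (ξ4 + ξ6) *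
        (‖f1 ξ1‖ * ‖f2 ξ2‖ * ‖f3 ξ3‖ * ‖f4 ξ4‖ * ‖f5 ξ5‖ * ‖f6 ξ6‖ *
          ‖f7 ξ7‖ * ‖f8 (-(ξ1 + ξ2 + ξ3 + ξ4 + ξ5 + ξ6 + ξ7))‖)) ≤
      (T1.indicator 1 (ξ2 + ξ3) * T2.indicator 1 (ξ1 + ξ3) *
        ((‖f1 ξ1‖₊ : ℝ≥0∞) * ((‖f2 ξ2‖₊ : ℝ≥0∞) * (‖f3 ξ3‖₊ : ℝ≥0∞)))) *
      ((T4.indicator 1 (ξ5 + ξ6) * T5.indicator 1 (ξ4 + ξ6) *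
        ((‖f4 ξ4‖₊ : ℝ≥0∞) * ((‖f5 ξ5‖₊ : ℝ≥0∞) * (‖f6 ξ6‖₊ : ℝ≥0∞)))) *
       ((‖f7 ξ7‖₊ : ℝ≥0∞) * (‖f8 (-(ξ1 + ξ2 + ξ3 + ξ4 + ξ5 + ξ6 + ξ7))‖₊ : ℝ≥0∞))) := by
    intro ξ1 ξ2 ξ3 ξ4 ξ5 ξ6 ξ7
    have q1 : (0:ℝ) ≤ φM1 (ξ2 + ξ3) := (hb1 _).1
    have q2 : (0:ℝ) ≤ φM2 (ξ1 + ξ3) := (hb2 _).1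
    have q4 : (0:ℝ) ≤ φM4 (ξ5 + ξ6) := (hb4 _).1
    have q5 : (0:ℝ) ≤ φM5 (ξ4 + ξ6) := (hb5 _).1
    rw [ENNReal.ofReal_mul (mul_nonneg (mul_nonneg (mul_nonneg q1 q2) q4) q5),
      ENNReal.ofReal_mul (mul_nonneg (mul_nonneg q1 q2) q4),
      ENNReal.ofReal_mul (mul_nonneg q1 q2),
      ENNReal.ofReal_mul q1,
      ENNReal.ofReal_mul (by positivity), ENNReal.ofReal_mul (by positivity),
      ENNReal.ofReal_mul (by positivity), ENNReal.ofReal_mul (by positivity),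
      ENNReal.ofReal_mul (by positivity), ENNReal.ofReal_mul (by positivity),
      ENNReal.ofReal_mul (by positivity)]
    simp only [ofReal_norm, enorm_eq_nnnorm]
    refine le_trans (mul_le_mul' (mul_le_mul' (mul_le_mul'
      (mul_le_mul' (hind M1 φM1 hb1 hs1 _) (hind M2 φM2 hb2 hs2 _))
      (hind M4 φM4 hb4 hs4 _)) (hind M5 φM5 hb5 hs5 _)) le_rfl) (le_of_eq (by ring))
  have key7 : ∀ ξ1 ξ2 ξ3 ξ4 ξ5 ξ6 : ℝ,
      (∫⁻ ξ7, ENNReal.ofReal (φM1 (ξ2 + ξ3) * φM2 (ξ1 + ξ3) * φM4 (ξ5 + ξ6) * φM5 (ξ4 + ξ6) *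
        (‖f1 ξ1‖ * ‖f2 ξ2‖ * ‖f3 ξ3‖ * ‖f4 ξ4‖ * ‖f5 ξ5‖ * ‖f6 ξ6‖ *
          ‖f7 ξ7‖ * ‖f8 (-(ξ1 + ξ2 + ξ3 + ξ4 + ξ5 + ξ6 + ξ7))‖))) ≤
      (T1.indicator 1 (ξ2 + ξ3) * T2.indicator 1 (ξ1 + ξ3) *
        ((‖f1 ξ1‖₊ : ℝ≥0∞) * ((‖f2 ξ2‖₊ : ℝ≥0∞) * (‖f3 ξ3‖₊ : ℝ≥0∞)))) *
      ((T4.indicator 1 (ξ5 + ξ6) * T5.indicator 1 (ξ4 + ξ6) *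
        ((‖f4 ξ4‖₊ : ℝ≥0∞) * ((‖f5 ξ5‖₊ : ℝ≥0∞) * (‖f6 ξ6‖₊ : ℝ≥0∞)))) * (N7 * N8)) := by
    intro ξ1 ξ2 ξ3 ξ4 ξ5 ξ6
    set W123 : ℝ≥0∞ := T1.indicator 1 (ξ2 + ξ3) * T2.indicator 1 (ξ1 + ξ3) *
      ((‖f1 ξ1‖₊ : ℝ≥0∞) * ((‖f2 ξ2‖₊ : ℝ≥0∞) * (‖f3 ξ3‖₊ : ℝ≥0∞))) with hW123def
    set W456 : ℝ≥0∞ := T4.indicator 1 (ξ5 + ξ6) * T5.indicator 1 (ξ4 + ξ6) *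
      ((‖f4 ξ4‖₊ : ℝ≥0∞) * ((‖f5 ξ5‖₊ : ℝ≥0∞) * (‖f6 ξ6‖₊ : ℝ≥0∞))) with hW456def
    have hfin : W123 * W456 ≠ ⊤ := by
      refine ENNReal.mul_ne_top (ENNReal.mul_ne_top (ENNReal.mul_ne_top
        (indicator_one_ne_top _ _) (indicator_one_ne_top _ _))
        (ENNReal.mul_ne_top ENNReal.coe_ne_top (ENNReal.mul_ne_top
          ENNReal.coe_ne_top ENNReal.coe_ne_top)))
        (ENNReal.mul_ne_top (ENNReal.mul_ne_top
        (indicator_one_ne_top _ _) (indicator_one_ne_top _ _))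
        (ENNReal.mul_ne_top ENNReal.coe_ne_top (ENNReal.mul_ne_top
          ENNReal.coe_ne_top ENNReal.coe_ne_top)))
    calc (∫⁻ ξ7, ENNReal.ofReal (φM1 (ξ2 + ξ3) * φM2 (ξ1 + ξ3) * φM4 (ξ5 + ξ6) *
            φM5 (ξ4 + ξ6) * (‖f1 ξ1‖ * ‖f2 ξ2‖ * ‖f3 ξ3‖ * ‖f4 ξ4‖ * ‖f5 ξ5‖ * ‖f6 ξ6‖ *
            ‖f7 ξ7‖ * ‖f8 (-(ξ1 + ξ2 + ξ3 + ξ4 + ξ5 + ξ6 + ξ7))‖)))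
        ≤ ∫⁻ ξ7, W123 * (W456 * ((‖f7 ξ7‖₊ : ℝ≥0∞) *
            (‖f8 (-(ξ1 + ξ2 + ξ3 + ξ4 + ξ5 + ξ6 + ξ7))‖₊ : ℝ≥0∞))) :=
          lintegral_mono fun ξ7 => hpt ξ1 ξ2 ξ3 ξ4 ξ5 ξ6 ξ7
      _ = (W123 * W456) * ∫⁻ ξ7, (‖f7 ξ7‖₊ : ℝ≥0∞) *
            (‖f8 (-(ξ1 + ξ2 + ξ3 + ξ4 + ξ5 + ξ6 + ξ7))‖₊ : ℝ≥0∞) := by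
          rw [← lintegral_const_mul' (W123 * W456) _ hfin]
          exact lintegral_congr fun ξ7 => by ring
      _ ≤ (W123 * W456) * (N7 * N8) := by
          refine mul_le_mul_right ?_ _
          rw [hN7def, hN8def]
          exact inner7 h7.1 h8.1 (ξ1 + ξ2 + ξ3 + ξ4 + ξ5 + ξ6)
      _ = W123 * (W456 * (N7 * N8)) := mul_assoc _ _ _
  -- squared-norm identities
  have hN1sq : (∫⁻ t, ((‖f1 t‖₊ : ℝ≥0∞)) ^ (2:ℝ)) ^ ((1:ℝ)/2) = N1 := eLpNorm_two_eq f1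
  have hN2sq : (∫⁻ t, ((‖f2 t‖₊ : ℝ≥0∞)) ^ (2:ℝ)) ^ ((1:ℝ)/2) = N2 := eLpNorm_two_eq f2
  have hN3sq : (∫⁻ t, ((‖f3 t‖₊ : ℝ≥0∞)) ^ (2:ℝ)) ^ ((1:ℝ)/2) = N3 := eLpNorm_two_eq f3
  have hN4sq : (∫⁻ t, ((‖f4 t‖₊ : ℝ≥0∞)) ^ (2:ℝ)) ^ ((1:ℝ)/2) = N4 := eLpNorm_two_eq f4
  have hN5sq : (∫⁻ t, ((‖f5 t‖₊ : ℝ≥0∞)) ^ (2:ℝ)) ^ ((1:ℝ)/2) = N5 := eLpNorm_two_eq f5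
  have hN6sq : (∫⁻ t, ((‖f6 t‖₊ : ℝ≥0∞)) ^ (2:ℝ)) ^ ((1:ℝ)/2) = N6 := eLpNorm_two_eq f6
  have htri123 : (∫⁻ x, ∫⁻ y, ∫⁻ z, T1.indicator 1 (y + z) * T2.indicator 1 (x + z) *
        ((‖f1 x‖₊ : ℝ≥0∞) * ((‖f2 y‖₊ : ℝ≥0∞) * (‖f3 z‖₊ : ℝ≥0∞))))
      ≤ volume T1 * volume T2 ^ ((1:ℝ)/2) * (N1 * (N2 * N3)) := by
    have := tri T1 T2 hT1m hT2m hT1f hT2f _ _ _ h1.1.enorm h2.1.enorm h3.1.enorm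
    simp only [enorm_eq_nnnorm] at this
    rwa [hN1sq, hN2sq, hN3sq] at this
  have htri456 : (∫⁻ x, ∫⁻ y, ∫⁻ z, T4.indicator 1 (y + z) * T5.indicator 1 (x + z) *
        ((‖f4 x‖₊ : ℝ≥0∞) * ((‖f5 y‖₊ : ℝ≥0∞) * (‖f6 z‖₊ : ℝ≥0∞))))
      ≤ volume T4 * volume T5 ^ ((1:ℝ)/2) * (N4 * (N5 * N6)) := by
    have := tri T4 T5 hT4m hT5m hT4f hT5f _ _ _ h4.1.enorm h5.1.enorm h6.1.enorm
    simp only [enorm_eq_nnnorm] at this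
    rwa [hN4sq, hN5sq, hN6sq] at this
  set E : ℝ≥0∞ := ENNReal.ofReal (4*M1) * ENNReal.ofReal (4*M2) ^ ((1:ℝ)/2) *
      (N1 * (N2 * N3)) * ((ENNReal.ofReal (4*M4) * ENNReal.ofReal (4*M5) ^ ((1:ℝ)/2) *
      (N4 * (N5 * N6))) * (N7 * N8)) with hEdef
  have hc : N7 * N8 ≠ ⊤ := ENNReal.mul_ne_top hN7ne hN8ne
  have hW123fin : ∀ ξ1 ξ2 ξ3 : ℝ, (T1.indicator 1 (ξ2 + ξ3) * T2.indicator 1 (ξ1 + ξ3) *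
      ((‖f1 ξ1‖₊ : ℝ≥0∞) * ((‖f2 ξ2‖₊ : ℝ≥0∞) * (‖f3 ξ3‖₊ : ℝ≥0∞)))) ≠ ⊤ := by
    intro ξ1 ξ2 ξ3
    exact ENNReal.mul_ne_top (ENNReal.mul_ne_top
      (indicator_one_ne_top _ _) (indicator_one_ne_top _ _))
      (ENNReal.mul_ne_top ENNReal.coe_ne_top (ENNReal.mul_ne_top
        ENNReal.coe_ne_top ENNReal.coe_ne_top))
  set B456 : ℝ≥0∞ := volume T4 * volume T5 ^ ((1:ℝ)/2) * (N4 * (N5 * N6)) with hB456def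
  have hB456fin : B456 ≠ ⊤ := ENNReal.mul_ne_top (ENNReal.mul_ne_top hT4f
    (ENNReal.rpow_ne_top_of_nonneg (by norm_num) hT5f))
    (ENNReal.mul_ne_top hN4ne (ENNReal.mul_ne_top hN5ne hN6ne))
  have hbc : B456 * (N7 * N8) ≠ ⊤ := ENNReal.mul_ne_top hB456fin hc
  have chain : (∫⁻ ξ1, ∫⁻ ξ2, ∫⁻ ξ3, ∫⁻ ξ4, ∫⁻ ξ5, ∫⁻ ξ6, ∫⁻ ξ7,
      ENNReal.ofReal (φM1 (ξ2 + ξ3) * φM2 (ξ1 + ξ3) * φM4 (ξ5 + ξ6) * φM5 (ξ4 + ξ6) *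
        (‖f1 ξ1‖ * ‖f2 ξ2‖ * ‖f3 ξ3‖ * ‖f4 ξ4‖ * ‖f5 ξ5‖ * ‖f6 ξ6‖ *
          ‖f7 ξ7‖ * ‖f8 (-(ξ1 + ξ2 + ξ3 + ξ4 + ξ5 + ξ6 + ξ7))‖))) ≤ E := by
    calc (∫⁻ ξ1, ∫⁻ ξ2, ∫⁻ ξ3, ∫⁻ ξ4, ∫⁻ ξ5, ∫⁻ ξ6, ∫⁻ ξ7,
        ENNReal.ofReal (φM1 (ξ2 + ξ3) * φM2 (ξ1 + ξ3) * φM4 (ξ5 + ξ6) * φM5 (ξ4 + ξ6) *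
          (‖f1 ξ1‖ * ‖f2 ξ2‖ * ‖f3 ξ3‖ * ‖f4 ξ4‖ * ‖f5 ξ5‖ * ‖f6 ξ6‖ *
            ‖f7 ξ7‖ * ‖f8 (-(ξ1 + ξ2 + ξ3 + ξ4 + ξ5 + ξ6 + ξ7))‖)))
        ≤ ∫⁻ ξ1, ∫⁻ ξ2, ∫⁻ ξ3, ∫⁻ ξ4, ∫⁻ ξ5, ∫⁻ ξ6,
            (T1.indicator 1 (ξ2 + ξ3) * T2.indicator 1 (ξ1 + ξ3) *
              ((‖f1 ξ1‖₊ : ℝ≥0∞) * ((‖f2 ξ2‖₊ : ℝ≥0∞) * (‖f3 ξ3‖₊ : ℝ≥0∞)))) *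
            ((T4.indicator 1 (ξ5 + ξ6) * T5.indicator 1 (ξ4 + ξ6) *
              ((‖f4 ξ4‖₊ : ℝ≥0∞) * ((‖f5 ξ5‖₊ : ℝ≥0∞) * (‖f6 ξ6‖₊ : ℝ≥0∞)))) * (N7 * N8)) :=
          lintegral_mono fun ξ1 => lintegral_mono fun ξ2 => lintegral_mono fun ξ3 =>
            lintegral_mono fun ξ4 => lintegral_mono fun ξ5 => lintegral_mono fun ξ6 =>
              key7 ξ1 ξ2 ξ3 ξ4 ξ5 ξ6
      _ = ∫⁻ ξ1, ∫⁻ ξ2, ∫⁻ ξ3,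
            (T1.indicator 1 (ξ2 + ξ3) * T2.indicator 1 (ξ1 + ξ3) *
              ((‖f1 ξ1‖₊ : ℝ≥0∞) * ((‖f2 ξ2‖₊ : ℝ≥0∞) * (‖f3 ξ3‖₊ : ℝ≥0∞)))) *
            ((∫⁻ ξ4, ∫⁻ ξ5, ∫⁻ ξ6, T4.indicator 1 (ξ5 + ξ6) * T5.indicator 1 (ξ4 + ξ6) *
              ((‖f4 ξ4‖₊ : ℝ≥0∞) * ((‖f5 ξ5‖₊ : ℝ≥0∞) * (‖f6 ξ6‖₊ : ℝ≥0∞)))) * (N7 * N8)) := by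
          refine lintegral_congr fun ξ1 => lintegral_congr fun ξ2 =>
            lintegral_congr fun ξ3 => ?_
          calc (∫⁻ ξ4, ∫⁻ ξ5, ∫⁻ ξ6,
              (T1.indicator 1 (ξ2 + ξ3) * T2.indicator 1 (ξ1 + ξ3) *
                ((‖f1 ξ1‖₊ : ℝ≥0∞) * ((‖f2 ξ2‖₊ : ℝ≥0∞) * (‖f3 ξ3‖₊ : ℝ≥0∞)))) *
              ((T4.indicator 1 (ξ5 + ξ6) * T5.indicator 1 (ξ4 + ξ6) *
                ((‖f4 ξ4‖₊ : ℝ≥0∞) * ((‖f5 ξ5‖₊ : ℝ≥0∞) * (‖f6 ξ6‖₊ : ℝ≥0∞)))) * (N7 * N8)))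
              = ∫⁻ ξ4, ∫⁻ ξ5,
                (T1.indicator 1 (ξ2 + ξ3) * T2.indicator 1 (ξ1 + ξ3) *
                  ((‖f1 ξ1‖₊ : ℝ≥0∞) * ((‖f2 ξ2‖₊ : ℝ≥0∞) * (‖f3 ξ3‖₊ : ℝ≥0∞)))) *
                ((∫⁻ ξ6, T4.indicator 1 (ξ5 + ξ6) * T5.indicator 1 (ξ4 + ξ6) *
                  ((‖f4 ξ4‖₊ : ℝ≥0∞) * ((‖f5 ξ5‖₊ : ℝ≥0∞) * (‖f6 ξ6‖₊ : ℝ≥0∞)))) * (N7 * N8)) :=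
                lintegral_congr fun ξ4 => lintegral_congr fun ξ5 =>
                  pull _ _ (hW123fin ξ1 ξ2 ξ3) hc _
            _ = ∫⁻ ξ4,
                (T1.indicator 1 (ξ2 + ξ3) * T2.indicator 1 (ξ1 + ξ3) *
                  ((‖f1 ξ1‖₊ : ℝ≥0∞) * ((‖f2 ξ2‖₊ : ℝ≥0∞) * (‖f3 ξ3‖₊ : ℝ≥0∞)))) *
                ((∫⁻ ξ5, ∫⁻ ξ6, T4.indicator 1 (ξ5 + ξ6) * T5.indicator 1 (ξ4 + ξ6) *
                  ((‖f4 ξ4‖₊ : ℝ≥0∞) * ((‖f5 ξ5‖₊ : ℝ≥0∞) * (‖f6 ξ6‖₊ : ℝ≥0∞)))) * (N7 * N8)) :=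
                lintegral_congr fun ξ4 => pull _ _ (hW123fin ξ1 ξ2 ξ3) hc _
            _ = _ := pull _ _ (hW123fin ξ1 ξ2 ξ3) hc _
      _ ≤ ∫⁻ ξ1, ∫⁻ ξ2, ∫⁻ ξ3,
            (T1.indicator 1 (ξ2 + ξ3) * T2.indicator 1 (ξ1 + ξ3) *
              ((‖f1 ξ1‖₊ : ℝ≥0∞) * ((‖f2 ξ2‖₊ : ℝ≥0∞) * (‖f3 ξ3‖₊ : ℝ≥0∞)))) *
            (B456 * (N7 * N8)) :=
          lintegral_mono fun ξ1 => lintegral_mono fun ξ2 => lintegral_mono fun ξ3 =>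
            mul_le_mul_right (mul_le_mul_left htri456 _) _
      _ = (∫⁻ ξ1, ∫⁻ ξ2, ∫⁻ ξ3,
            T1.indicator 1 (ξ2 + ξ3) * T2.indicator 1 (ξ1 + ξ3) *
              ((‖f1 ξ1‖₊ : ℝ≥0∞) * ((‖f2 ξ2‖₊ : ℝ≥0∞) * (‖f3 ξ3‖₊ : ℝ≥0∞)))) *
            (B456 * (N7 * N8)) := by
          refine Eq.trans (lintegral_congr fun ξ1 => ?_) (lintegral_mul_const' _ _ hbc)
          refine Eq.trans (lintegral_congr fun ξ2 => ?_) (lintegral_mul_const' _ _ hbc)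
          exact lintegral_mul_const' _ _ hbc
      _ ≤ (volume T1 * volume T2 ^ ((1:ℝ)/2) * (N1 * (N2 * N3))) * (B456 * (N7 * N8)) :=
          mul_le_mul_left htri123 _
      _ ≤ E := by
          rw [hEdef, hB456def]
          exact mul_le_mul' (mul_le_mul' (mul_le_mul' (hvol M1)
            (ENNReal.rpow_le_rpow (hvol M2) (by norm_num))) le_rfl)
            (mul_le_mul' (mul_le_mul' (mul_le_mul' (hvol M4)
              (ENNReal.rpow_le_rpow (hvol M5) (by norm_num))) le_rfl) le_rfl)
  have hEfin : E ≠ ⊤ := by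
    rw [hEdef]
    exact ENNReal.mul_ne_top (ENNReal.mul_ne_top (ENNReal.mul_ne_top ENNReal.ofReal_ne_top
      (ENNReal.rpow_ne_top_of_nonneg (by norm_num) ENNReal.ofReal_ne_top))
      (ENNReal.mul_ne_top hN1ne (ENNReal.mul_ne_top hN2ne hN3ne)))
      (ENNReal.mul_ne_top (ENNReal.mul_ne_top (ENNReal.mul_ne_top ENNReal.ofReal_ne_top
        (ENNReal.rpow_ne_top_of_nonneg (by norm_num) ENNReal.ofReal_ne_top))
        (ENNReal.mul_ne_top hN4ne (ENNReal.mul_ne_top hN5ne hN6ne)))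
      (ENNReal.mul_ne_top hN7ne hN8ne))
  have h0 : (0:ℝ) ≤ ∫ ξ1 : ℝ, ∫ ξ2 : ℝ, ∫ ξ3 : ℝ, ∫ ξ4 : ℝ, ∫ ξ5 : ℝ, ∫ ξ6 : ℝ, ∫ ξ7 : ℝ,
      φM1 (ξ2 + ξ3) * φM2 (ξ1 + ξ3) * φM4 (ξ5 + ξ6) * φM5 (ξ4 + ξ6) *
        (‖f1 ξ1‖ * ‖f2 ξ2‖ * ‖f3 ξ3‖ * ‖f4 ξ4‖ * ‖f5 ξ5‖ * ‖f6 ξ6‖ *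
          ‖f7 ξ7‖ * ‖f8 (-(ξ1 + ξ2 + ξ3 + ξ4 + ξ5 + ξ6 + ξ7))‖) :=
    integral_nonneg fun ξ1 => integral_nonneg fun ξ2 => integral_nonneg fun ξ3 =>
      integral_nonneg fun ξ4 => integral_nonneg fun ξ5 => integral_nonneg fun ξ6 =>
        integral_nonneg fun ξ7 => hPnn ξ1 ξ2 ξ3 ξ4 ξ5 ξ6 ξ7
  have hbr := (bridge7 (fun ξ1 ξ2 ξ3 ξ4 ξ5 ξ6 ξ7 =>
      φM1 (ξ2 + ξ3) * φM2 (ξ1 + ξ3) * φM4 (ξ5 + ξ6) * φM5 (ξ4 + ξ6) *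
        (‖f1 ξ1‖ * ‖f2 ξ2‖ * ‖f3 ξ3‖ * ‖f4 ξ4‖ * ‖f5 ξ5‖ * ‖f6 ξ6‖ *
          ‖f7 ξ7‖ * ‖f8 (-(ξ1 + ξ2 + ξ3 + ξ4 + ξ5 + ξ6 + ξ7))‖)) hPnn).trans chain
  calc (∫ ξ1 : ℝ, ∫ ξ2 : ℝ, ∫ ξ3 : ℝ, ∫ ξ4 : ℝ, ∫ ξ5 : ℝ, ∫ ξ6 : ℝ, ∫ ξ7 : ℝ,
      φM1 (ξ2 + ξ3) * φM2 (ξ1 + ξ3) * φM4 (ξ5 + ξ6) * φM5 (ξ4 + ξ6) *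
        (‖f1 ξ1‖ * ‖f2 ξ2‖ * ‖f3 ξ3‖ * ‖f4 ξ4‖ * ‖f5 ξ5‖ * ‖f6 ξ6‖ *
          ‖f7 ξ7‖ * ‖f8 (-(ξ1 + ξ2 + ξ3 + ξ4 + ξ5 + ξ6 + ξ7))‖))
      = (ENNReal.ofReal (∫ ξ1 : ℝ, ∫ ξ2 : ℝ, ∫ ξ3 : ℝ, ∫ ξ4 : ℝ, ∫ ξ5 : ℝ, ∫ ξ6 : ℝ, ∫ ξ7 : ℝ,
          φM1 (ξ2 + ξ3) * φM2 (ξ1 + ξ3) * φM4 (ξ5 + ξ6) * φM5 (ξ4 + ξ6) *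
            (‖f1 ξ1‖ * ‖f2 ξ2‖ * ‖f3 ξ3‖ * ‖f4 ξ4‖ * ‖f5 ξ5‖ * ‖f6 ξ6‖ *
              ‖f7 ξ7‖ * ‖f8 (-(ξ1 + ξ2 + ξ3 + ξ4 + ξ5 + ξ6 + ξ7))‖))).toReal :=
        (ENNReal.toReal_ofReal h0).symm
    _ ≤ E.toReal := ENNReal.toReal_mono hEfin hbr
    _ = 64 * (M1 * M2 ^ ((1 : ℝ) / 2) * M4 * M5 ^ ((1 : ℝ) / 2)) *
        (N1.toReal * N2.toReal * N3.toReal * N4.toReal * N5.toReal * N6.toReal *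
          N7.toReal * N8.toReal) := by
        rw [hEdef]
        simp only [ENNReal.toReal_mul, ← ENNReal.toReal_rpow]
        rw [ENNReal.toReal_ofReal (by positivity : (0:ℝ) ≤ 4*M1),
          ENNReal.toReal_ofReal (by positivity : (0:ℝ) ≤ 4*M2),
          ENNReal.toReal_ofReal (by positivity : (0:ℝ) ≤ 4*M4),
          ENNReal.toReal_ofReal (by positivity : (0:ℝ) ≤ 4*M5),
          h4half M2 hM2.le, h4half M5 hM5.le]
        ring
end
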